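/- arXiv:2603.13178 — 6 statements merged into one kernel-verified Lean document; each statement's English description precedes it below -/
import Mathlib

section
/- Let G be a finite bipartite simple graph with bipartition (X, Y). Then G admits a locally irregular total coloring with two colors, red and blue, such that every edge of G is colored red, every vertex x ∈ X has even total red degree, and every vertex y ∈ Y has odd total red degree. -/
open Finset
open scoped Classical

variable {V : Type*}

/-- The total degree of a vertex `v` in color `i`, given a vertex coloring `cV` and an
edge coloring `cE` of a graph `G` with `k` colors: the number of edges of color `i`
incident to `v`, plus `1` if `v` itself has color `i`. -/
noncomputable def totalDeg [Fintype V] (G : SimpleGraph V) {k : ℕ}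
    (cV : V → Fin k) (cE : Sym2 V → Fin k) (i : Fin k) (v : V) : ℕ :=
  (univ.filter fun u => G.Adj v u ∧ cE s(v, u) = i).card + (if cV v = i then 1 else 0)

/-- `(cV, cE)` is a locally irregular total coloring of `G`: for every edge `uv`,
the total degrees of `u` and `v` in the color of `uv` are distinct. -/
def IsTLIR [Fintype V] (G : SimpleGraph V) {k : ℕ}
    (cV : V → Fin k) (cE : Sym2 V → Fin k) : Prop :=
  ∀ u v, G.Adj u v →
    totalDeg G cV cE (cE s(u, v)) u ≠ totalDeg G cV cE (cE s(u, v)) v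

/-- `G` admits a locally irregular total coloring with `k` colors, i.e. `tlir(G) ≤ k`. -/
def HasTLIR [Fintype V] (G : SimpleGraph V) (k : ℕ) : Prop :=
  ∃ (cV : V → Fin k) (cE : Sym2 V → Fin k), IsTLIR G cV cE

/-- Every finite bipartite graph with bipartition `(X, Y)` admits a
red-blue (red = `0`, blue = `1`) locally irregular total coloring in which every edge
is red, every vertex of `X` has even total red degree, and every vertex of `Y` has odd
total red degree. -/
theorem stmt0 {V : Type*} [Fintype V] (G : SimpleGraph V) (X Y : Set V)
    (hdisj : Disjoint X Y) (hcover : X ∪ Y = Set.univ)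
    (hbip : ∀ u v, G.Adj u v → (u ∈ X ∧ v ∈ Y) ∨ (u ∈ Y ∧ v ∈ X)) :
    ∃ (cV : V → Fin 2) (cE : Sym2 V → Fin 2),
      IsTLIR G cV cE ∧
      (∀ u v, G.Adj u v → cE s(u, v) = 0) ∧
      (∀ x ∈ X, Even (totalDeg G cV cE 0 x)) ∧
      (∀ y ∈ Y, Odd (totalDeg G cV cE 0 y)) := by
  classical
  set cV : V → Fin 2 := fun v =>
    if v ∈ X then (if Even (G.degree v) then 1 else 0)
    else (if Even (G.degree v) then 0 else 1) with hcV
  refine ⟨cV, fun _ => 0, ?_, fun _ _ _ => rfl, ?_, ?_⟩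
  all_goals
    have hdeg : ∀ v : V, totalDeg G cV (fun _ => 0) 0 v
        = G.degree v + (if cV v = 0 then 1 else 0) := by
      intro v
      unfold totalDeg
      congr 1
      rw [← SimpleGraph.card_neighborFinset_eq_degree]
      congr 1
      ext u
      simp [SimpleGraph.neighborFinset]
  · -- IsTLIR
    have hX : ∀ x ∈ X, Even (totalDeg G cV (fun _ => 0) 0 x) := by
      intro x hx
      rw [hdeg]
      by_cases h : Even (G.degree x) <;> simp [hcV, hx, h, Nat.even_add_one, Nat.not_even_iff_odd]
    have hY : ∀ y ∈ Y, Odd (totalDeg G cV (fun _ => 0) 0 y) := by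
      intro y hy
      have hyX : y ∉ X := fun h => hdisj.ne_of_mem h hy rfl
      rw [hdeg]
      by_cases h : Even (G.degree y) <;>
        simp [hcV, hyX, h, Nat.odd_add_one, Nat.not_even_iff_odd, Nat.not_odd_iff_even,
          parity_simps]
      exact Nat.not_even_iff_odd.mp h
    intro u v huv
    rcases hbip u v huv with ⟨hu, hv⟩ | ⟨hu, hv⟩
    · intro heq
      exact (Nat.not_odd_iff_even.mpr (hX u hu)) (heq ▸ hY v hv)
    · intro heq
      exact (Nat.not_odd_iff_even.mpr (hX v hv)) (heq ▸ hY u hu)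
  · intro x hx
    rw [hdeg]
    by_cases h : Even (G.degree x) <;> simp [hcV, hx, h, Nat.even_add_one, Nat.not_even_iff_odd]
  · intro y hy
    have hyX : y ∉ X := fun h => hdisj.ne_of_mem h hy rfl
    rw [hdeg]
    by_cases h : Even (G.degree y) <;>
      simp [hcV, hyX, h, Nat.odd_add_one, Nat.not_even_iff_odd, Nat.not_odd_iff_even,
        parity_simps]
    exact Nat.not_even_iff_odd.mp h
end

section
/- If G is a finite split graph, then G admits a locally irregular total coloring with 2 colors, i.e., tlir(G) ≤ 2. -/
open Finset
open scoped Classical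

variable {V : Type*}

/-!
Order the clique `X = {x₀, …, x_{m-1}}` so that the number `g xᵢ` of neighbours of `xᵢ` outside
`X` decreases along the first half (`2i < m`) and increases along the second half. Colour the
clique edge `xᵢxⱼ` with `0` if `i + j ≥ m` and `1` otherwise, the vertex `xᵢ` like the loop
`xᵢxᵢ`, and every edge `xᵢy` with `y ∉ X` like the vertex `xᵢ`. Then `xᵢ` has total degree
`i + [2i ≥ m] g xᵢ` in colour `0` and `m - i + [2i < m] g xᵢ` in colour `1`: the first is strictly
increasing and the second strictly decreasing in `i`, which settles the clique edges. A vertex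
`y ∉ X` meets at most `⌊m/2⌋` edges of colour `0` and `⌈m/2⌉` of colour `1`; colouring `y` by
the parity of `m` keeps its total degrees at most `⌈m/2⌉` and `⌊m/2⌋ + 1`, below those of its
neighbours in the colour of the joining edge, since `g x ≥ 1` for them.
-/

lemma exists_equiv_fin_monotone {ι β : Type*} [Fintype ι] [LinearOrder β] (f : ι → β) :
    ∃ e : Fin (Fintype.card ι) ≃ ι, Monotone (f ∘ e) :=
  let e₀ := (Fintype.equivFin ι).symm
  ⟨(Tuple.sort (f ∘ e₀)).trans e₀, Tuple.monotone_sort (f ∘ e₀)⟩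

/-- Composing a monotone sequence with `foldFin m` makes it decrease on the first half of `Fin m`
and increase on the second. -/
def foldFin (m : ℕ) (i : Fin m) : Fin m :=
  if 2 * (i : ℕ) < m then ⟨m - 1 - i, by omega⟩ else ⟨i - (m - m / 2), by omega⟩

lemma foldFin_injective (m : ℕ) : Function.Injective (foldFin m) := by
  intro i j h
  have := i.2
  have := j.2
  by_cases hi : 2 * (i : ℕ) < m <;> by_cases hj : 2 * (j : ℕ) < m <;>
    simp only [foldFin, hi, hj, if_true, if_false, Fin.mk.injEq] at h <;> ext <;> omega

lemma foldFin_le_of_lt_half {m : ℕ} {i j : Fin m} (hij : i ≤ j) (hj : 2 * (j : ℕ) < m) :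
    foldFin m j ≤ foldFin m i := by
  have hi : 2 * (i : ℕ) < m := by omega
  simp only [foldFin, hi, hj, if_true, Fin.mk_le_mk]
  omega

lemma foldFin_le_of_half_le {m : ℕ} {i j : Fin m} (hij : i ≤ j) (hi : m ≤ 2 * (i : ℕ)) :
    foldFin m i ≤ foldFin m j := by
  have hj : ¬ 2 * (j : ℕ) < m := by omega
  simp only [foldFin, show ¬ 2 * (i : ℕ) < m by omega, hj, if_false, Fin.mk_le_mk]
  omega

structure IsValleyOrder {β : Type*} [LinearOrder β] (X : Set V) (m : ℕ) (p : V → ℕ)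
    (f : V → β) : Prop where
  bijOn : Set.BijOn p X (Set.Iio m)
  antitone_head : ∀ ⦃u⦄, u ∈ X → ∀ ⦃v⦄, v ∈ X → p u ≤ p v → 2 * p v < m → f v ≤ f u
  monotone_tail : ∀ ⦃u⦄, u ∈ X → ∀ ⦃v⦄, v ∈ X → p u ≤ p v → m ≤ 2 * p u → f u ≤ f v

lemma exists_equiv_fin_valley {ι β : Type*} [Fintype ι] [LinearOrder β] (f : ι → β) :
    ∃ E : Fin (Fintype.card ι) ≃ ι,
      (∀ i j : Fin _, i ≤ j → 2 * (j : ℕ) < Fintype.card ι → f (E j) ≤ f (E i)) ∧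
      (∀ i j : Fin _, i ≤ j → Fintype.card ι ≤ 2 * (i : ℕ) → f (E i) ≤ f (E j)) := by
  obtain ⟨e, he⟩ := exists_equiv_fin_monotone f
  refine ⟨(Equiv.ofBijective _ (Finite.injective_iff_bijective.1 (foldFin_injective _))).trans e,
    fun i j hij hj => he (foldFin_le_of_lt_half hij hj),
    fun i j hij hi => he (foldFin_le_of_half_le hij hi)⟩

lemma exists_isValleyOrder {β : Type*} [LinearOrder β] (X : Set V) [Fintype X] (f : V → β) :
    ∃ m p, IsValleyOrder X m p f := by
  obtain ⟨E, hhead, htail⟩ := exists_equiv_fin_valley fun x : X => f x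
  let p : V → ℕ := fun v => if h : v ∈ X then E.symm ⟨v, h⟩ else 0
  have hpE (v : V) (h : v ∈ X) : p v = E.symm ⟨v, h⟩ := dif_pos h
  have hfE (v : V) (h : v ∈ X) : f v = f (E (E.symm ⟨v, h⟩)) := by simp
  have hbij : Set.BijOn p X (Set.Iio (Fintype.card X)) := by
    refine ⟨fun v h => ?_, fun u hu v hv huv => ?_, fun j hj => ?_⟩
    · rw [Set.mem_Iio, hpE v h]
      exact Fin.is_lt _
    · rw [hpE u hu, hpE v hv] at huv
      simpa using E.symm.injective (Fin.ext huv)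
    · exact ⟨E ⟨j, hj⟩, (E ⟨j, hj⟩).2, by simp [hpE _ (E ⟨j, hj⟩).2]⟩
  refine ⟨_, p, hbij, fun u hu v hv huv hv2 => ?_, fun u hu v hv huv hu2 => ?_⟩
  · simp only [hpE _ hu, hpE _ hv] at huv hv2
    rw [hfE u hu, hfE v hv]
    exact hhead _ _ huv hv2
  · simp only [hpE _ hu, hpE _ hv] at huv hu2
    rw [hfE u hu, hfE v hv]
    exact htail _ _ huv hu2

section TotalDegree

variable [Fintype V] {G : SimpleGraph V} {X : Set V} {k : ℕ} {cV : V → Fin k}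
  {cE : Sym2 V → Fin k}

variable (G X) in
noncomputable def degreeOutside (v : V) : ℕ := #{u | G.Adj v u ∧ u ∉ X}

lemma degreeOutside_pos {x y : V} (hxy : G.Adj x y) (hy : y ∉ X) : 0 < degreeOutside G X x :=
  card_pos.2 ⟨y, by simp [hxy, hy]⟩

/-- Giving the loop `s(x, x)` the colour of `x` counts the vertex colour of `x` as one more
clique neighbour. -/
lemma totalDeg_eq_of_mem_clique (hX : G.IsClique X) {x : V} (hx : x ∈ X)
    (hdiag : cE s(x, x) = cV x) (hout : ∀ y ∉ X, cE s(x, y) = cV x) (c : Fin k) :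
    totalDeg G cV cE c x =
      #{u | u ∈ X ∧ cE s(x, u) = c} + if cV x = c then degreeOutside G X x else 0 := by
  have hin : #{u | G.Adj x u ∧ cE s(x, u) = c ∧ u ∈ X} + (if cV x = c then 1 else 0) =
      #{u | u ∈ X ∧ cE s(x, u) = c} := by
    have herase : ({u | G.Adj x u ∧ cE s(x, u) = c ∧ u ∈ X} : Finset V) =
        ({u | u ∈ X ∧ cE s(x, u) = c} : Finset V).erase x := by
      ext u
      simp only [mem_filter, mem_univ, true_and, mem_erase]
      exact ⟨fun ⟨hadj, hc, hu⟩ => ⟨hadj.ne.symm, hu, hc⟩,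
        fun ⟨hne, hu, hc⟩ => ⟨hX hx hu hne.symm, hc, hu⟩⟩
    rw [herase]
    split_ifs with hc
    · exact card_erase_add_one (by simp [hx, hdiag, hc])
    · rw [erase_eq_of_notMem (by simp [hdiag, hc]), add_zero]
  have hnotin : #{u | G.Adj x u ∧ cE s(x, u) = c ∧ u ∉ X} =
      if cV x = c then degreeOutside G X x else 0 := by
    split_ifs with hc
    · exact congrArg card (filter_congr fun u _ => by
        by_cases hu : u ∈ X <;> simp [hu, hout, hc])
    · exact card_eq_zero.2 (filter_false_of_mem fun u _ ⟨_, hcu, hu⟩ => hc (hout u hu ▸ hcu))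
  rw [totalDeg, ← card_filter_add_card_filter_not (· ∈ X), filter_filter, filter_filter,
    ← hin, ← hnotin]
  simp only [and_assoc]
  omega

lemma totalDeg_le_of_forall_adj_mem {y : V} (hN : ∀ u, G.Adj y u → u ∈ X)
    (hcol : ∀ u ∈ X, cE s(y, u) = cV u) (c : Fin k) :
    totalDeg G cV cE c y ≤ #{u | u ∈ X ∧ cV u = c} + if cV y = c then 1 else 0 := by
  refine Nat.add_le_add_right (card_le_card fun u hu => ?_) _
  simp only [mem_filter, mem_univ, true_and] at hu ⊢
  exact ⟨hN u hu.1, hcol u (hN u hu.1) ▸ hu.2⟩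

end TotalDegree

lemma card_filter_mem_eq_of_bijOn [Fintype V] {X : Set V} {m : ℕ} {p : V → ℕ}
    (hp : Set.BijOn p X (Set.Iio m)) (P : ℕ → Prop) [DecidablePred P] :
    #{u | u ∈ X ∧ P (p u)} = #{j ∈ range m | P j} := by
  refine card_nbij p (fun u hu => ?_) (hp.injOn.mono fun u hu => ?_) fun j hj => ?_
  · simp only [coe_filter, mem_univ, true_and, Set.mem_ofPred_eq, mem_range] at hu ⊢
    exact ⟨hp.mapsTo hu.1, hu.2⟩
  · simp only [coe_filter, mem_univ, true_and, Set.mem_ofPred_eq] at hu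
    exact hu.1
  · simp only [coe_filter, mem_range, Set.mem_ofPred_eq] at hj
    obtain ⟨u, hu, rfl⟩ := hp.surjOn (Set.mem_Iio.2 hj.1)
    exact ⟨u, by simp [hu, hj.2], rfl⟩

lemma card_range_filter_le (m a : ℕ) : #{j ∈ range m | a ≤ j} = m - a := by
  rw [range_eq_Ico, Ico_filter_le, Nat.card_Ico, max_eq_right (Nat.zero_le a)]

lemma card_range_filter_not_le (m a : ℕ) : #{j ∈ range m | ¬ a ≤ j} = min a m := by
  have := card_filter_add_card_filter_not (s := range m) (a ≤ ·)
  rw [card_range_filter_le, card_range] at this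
  omega

section SplitColoring

variable (X : Set V) (m : ℕ) (p : V → ℕ)

/-- A vertex outside `X` borrows the position of the other endpoint, so that an edge `xy` with
`y ∉ X` is coloured like the loop `xx`, that is, like the vertex `x`. -/
noncomputable def edgePos (u v : V) : ℕ := if u ∈ X then p u else p v

noncomputable def splitEdgeColor : Sym2 V → Fin 2 :=
  Sym2.lift ⟨fun u v => if m ≤ edgePos X p u v + edgePos X p v u then 0 else 1,
    fun u v => by dsimp only; rw [add_comm]⟩

noncomputable def splitVertexColor (v : V) : Fin 2 :=
  if v ∈ X then (if m ≤ 2 * p v then 0 else 1) else (if m % 2 = 0 then 1 else 0)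

variable {X m p}

lemma splitEdgeColor_mk_of_mem {u v : V} (hu : u ∈ X) (hv : v ∈ X) :
    splitEdgeColor X m p s(u, v) = if m ≤ p u + p v then 0 else 1 := by
  simp [splitEdgeColor, edgePos, hu, hv]

lemma splitEdgeColor_mk_self {x : V} (hx : x ∈ X) :
    splitEdgeColor X m p s(x, x) = splitVertexColor X m p x := by
  simp [splitEdgeColor_mk_of_mem hx hx, splitVertexColor, hx, two_mul]

lemma splitEdgeColor_mk_of_not_mem {x y : V} (hx : x ∈ X) (hy : y ∉ X) :
    splitEdgeColor X m p s(x, y) = splitVertexColor X m p x := by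
  simp [splitEdgeColor, splitVertexColor, edgePos, hx, hy, two_mul]

lemma splitEdgeColor_mk_of_not_mem_of_mem {x y : V} (hy : y ∉ X) (hx : x ∈ X) :
    splitEdgeColor X m p s(y, x) = splitVertexColor X m p x := by
  rw [Sym2.eq_swap, splitEdgeColor_mk_of_not_mem hx hy]

lemma splitEdgeColor_mk_eq_zero_iff {u v : V} (hu : u ∈ X) (hv : v ∈ X) :
    splitEdgeColor X m p s(u, v) = 0 ↔ m ≤ p u + p v := by
  by_cases h : m ≤ p u + p v <;> simp [splitEdgeColor_mk_of_mem hu hv, h]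

lemma splitEdgeColor_mk_eq_one_iff {u v : V} (hu : u ∈ X) (hv : v ∈ X) :
    splitEdgeColor X m p s(u, v) = 1 ↔ ¬ m ≤ p u + p v := by
  by_cases h : m ≤ p u + p v <;> simp [splitEdgeColor_mk_of_mem hu hv, h]

lemma splitVertexColor_eq_zero_iff {x : V} (hx : x ∈ X) :
    splitVertexColor X m p x = 0 ↔ m ≤ 2 * p x := by
  by_cases h : m ≤ 2 * p x <;> simp [splitVertexColor, hx, h]

lemma splitVertexColor_eq_one_iff {x : V} (hx : x ∈ X) :
    splitVertexColor X m p x = 1 ↔ ¬ m ≤ 2 * p x := by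
  by_cases h : m ≤ 2 * p x <;> simp [splitVertexColor, hx, h]

end SplitColoring

section SplitTotalDegree

variable [Fintype V] {G : SimpleGraph V} {X : Set V} {m : ℕ} {p : V → ℕ}

lemma totalDeg_split_zero_of_mem (hX : G.IsClique X) (hp : Set.BijOn p X (Set.Iio m))
    {x : V} (hx : x ∈ X) :
    totalDeg G (splitVertexColor X m p) (splitEdgeColor X m p) 0 x =
      p x + if m ≤ 2 * p x then degreeOutside G X x else 0 := by
  have hxm : p x < m := hp.mapsTo hx
  have hcount : #{u | u ∈ X ∧ splitEdgeColor X m p s(x, u) = 0} = p x := by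
    rw [filter_congr (q := fun u => u ∈ X ∧ m - p x ≤ p u) fun u _ => and_congr_right fun hu => by
        rw [splitEdgeColor_mk_eq_zero_iff hx hu]; omega,
      card_filter_mem_eq_of_bijOn hp (m - p x ≤ ·), card_range_filter_le]
    omega
  rw [totalDeg_eq_of_mem_clique hX hx (splitEdgeColor_mk_self hx)
    (fun _ hy => splitEdgeColor_mk_of_not_mem hx hy), hcount]
  simp only [splitVertexColor_eq_zero_iff hx]

lemma totalDeg_split_one_of_mem (hX : G.IsClique X) (hp : Set.BijOn p X (Set.Iio m))
    {x : V} (hx : x ∈ X) :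
    totalDeg G (splitVertexColor X m p) (splitEdgeColor X m p) 1 x =
      m - p x + if m ≤ 2 * p x then 0 else degreeOutside G X x := by
  have hxm : p x < m := hp.mapsTo hx
  have hcount : #{u | u ∈ X ∧ splitEdgeColor X m p s(x, u) = 1} = m - p x := by
    rw [filter_congr (q := fun u => u ∈ X ∧ ¬ m - p x ≤ p u) fun u _ => and_congr_right fun hu => by
        rw [splitEdgeColor_mk_eq_one_iff hx hu]; omega,
      card_filter_mem_eq_of_bijOn hp (¬ m - p x ≤ ·), card_range_filter_not_le]
    omega
  rw [totalDeg_eq_of_mem_clique hX hx (splitEdgeColor_mk_self hx)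
    (fun _ hy => splitEdgeColor_mk_of_not_mem hx hy), hcount]
  simp only [splitVertexColor_eq_one_iff hx, ite_not]

lemma card_filter_splitVertexColor_eq_zero (hp : Set.BijOn p X (Set.Iio m)) :
    #{u | u ∈ X ∧ splitVertexColor X m p u = 0} = m / 2 := by
  rw [filter_congr (q := fun u => u ∈ X ∧ m - m / 2 ≤ p u) fun u _ => and_congr_right fun hu => by
      rw [splitVertexColor_eq_zero_iff hu]; omega,
    card_filter_mem_eq_of_bijOn hp (m - m / 2 ≤ ·), card_range_filter_le]
  omega

lemma card_filter_splitVertexColor_eq_one (hp : Set.BijOn p X (Set.Iio m)) :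
    #{u | u ∈ X ∧ splitVertexColor X m p u = 1} = m - m / 2 := by
  rw [filter_congr (q := fun u => u ∈ X ∧ ¬ m - m / 2 ≤ p u) fun u _ => and_congr_right fun hu => by
      rw [splitVertexColor_eq_one_iff hu]; omega,
    card_filter_mem_eq_of_bijOn hp (¬ m - m / 2 ≤ ·), card_range_filter_not_le]
  omega

lemma totalDeg_split_zero_le_of_not_mem (hp : Set.BijOn p X (Set.Iio m)) {y : V} (hy : y ∉ X)
    (hN : ∀ u, G.Adj y u → u ∈ X) :
    totalDeg G (splitVertexColor X m p) (splitEdgeColor X m p) 0 y ≤ m - m / 2 := by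
  have hcol : ∀ u ∈ X, splitEdgeColor X m p s(y, u) = splitVertexColor X m p u :=
    fun _ hu => splitEdgeColor_mk_of_not_mem_of_mem hy hu
  have := totalDeg_le_of_forall_adj_mem hN hcol 0
  rw [card_filter_splitVertexColor_eq_zero hp] at this
  by_cases hm : m % 2 = 0 <;>
    simp only [splitVertexColor, hy, hm, if_false, if_true, one_ne_zero] at this <;>
    omega

lemma totalDeg_split_one_le_of_not_mem (hp : Set.BijOn p X (Set.Iio m)) {y : V} (hy : y ∉ X)
    (hN : ∀ u, G.Adj y u → u ∈ X) :
    totalDeg G (splitVertexColor X m p) (splitEdgeColor X m p) 1 y ≤ m / 2 + 1 := by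
  have hcol : ∀ u ∈ X, splitEdgeColor X m p s(y, u) = splitVertexColor X m p u :=
    fun _ hu => splitEdgeColor_mk_of_not_mem_of_mem hy hu
  have := totalDeg_le_of_forall_adj_mem hN hcol 1
  rw [card_filter_splitVertexColor_eq_one hp] at this
  by_cases hm : m % 2 = 0 <;>
    simp only [splitVertexColor, hy, hm, if_false, if_true, zero_ne_one] at this <;>
    omega

lemma totalDeg_split_zero_lt (hX : G.IsClique X) (hp : IsValleyOrder X m p (degreeOutside G X))
    {u v : V} (hu : u ∈ X) (hv : v ∈ X) (huv : p u < p v) :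
    totalDeg G (splitVertexColor X m p) (splitEdgeColor X m p) 0 u <
      totalDeg G (splitVertexColor X m p) (splitEdgeColor X m p) 0 v := by
  rw [totalDeg_split_zero_of_mem hX hp.bijOn hu, totalDeg_split_zero_of_mem hX hp.bijOn hv]
  by_cases hu2 : m ≤ 2 * p u
  · have := hp.monotone_tail hu hv huv.le hu2
    rw [if_pos hu2, if_pos (by omega)]
    omega
  · split_ifs <;> omega

lemma totalDeg_split_one_lt (hX : G.IsClique X) (hp : IsValleyOrder X m p (degreeOutside G X))
    {u v : V} (hu : u ∈ X) (hv : v ∈ X) (huv : p u < p v) :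
    totalDeg G (splitVertexColor X m p) (splitEdgeColor X m p) 1 v <
      totalDeg G (splitVertexColor X m p) (splitEdgeColor X m p) 1 u := by
  have hvm : p v < m := hp.bijOn.mapsTo hv
  rw [totalDeg_split_one_of_mem hX hp.bijOn hu, totalDeg_split_one_of_mem hX hp.bijOn hv]
  by_cases hv2 : 2 * p v < m
  · have := hp.antitone_head hu hv huv.le hv2
    rw [if_neg (by omega), if_neg (by omega)]
    omega
  · split_ifs <;> omega

lemma totalDeg_split_ne_of_mem (hX : G.IsClique X) (hp : IsValleyOrder X m p (degreeOutside G X))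
    {u v : V} (hu : u ∈ X) (hv : v ∈ X) (huv : u ≠ v) (c : Fin 2) :
    totalDeg G (splitVertexColor X m p) (splitEdgeColor X m p) c u ≠
      totalDeg G (splitVertexColor X m p) (splitEdgeColor X m p) c v := by
  have hne : p u ≠ p v := fun h => huv (hp.bijOn.injOn hu hv h)
  wlog h : p u < p v generalizing u v
  · exact (this hv hu huv.symm hne.symm (lt_of_le_of_ne (not_lt.1 h) hne.symm)).symm
  fin_cases c
  · exact (totalDeg_split_zero_lt hX hp hu hv h).ne
  · exact (totalDeg_split_one_lt hX hp hu hv h).ne'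

lemma totalDeg_split_ne_of_not_mem (hX : G.IsClique X) (hp : Set.BijOn p X (Set.Iio m))
    {x y : V} (hx : x ∈ X) (hy : y ∉ X) (hN : ∀ u, G.Adj y u → u ∈ X) (hxy : G.Adj x y) :
    totalDeg G (splitVertexColor X m p) (splitEdgeColor X m p)
        (splitEdgeColor X m p s(x, y)) x ≠
      totalDeg G (splitVertexColor X m p) (splitEdgeColor X m p)
        (splitEdgeColor X m p s(x, y)) y := by
  have hg := degreeOutside_pos hxy hy
  rw [splitEdgeColor_mk_of_not_mem hx hy]
  by_cases hx2 : m ≤ 2 * p x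
  · have hy0 := totalDeg_split_zero_le_of_not_mem hp hy hN
    rw [(splitVertexColor_eq_zero_iff hx).2 hx2, totalDeg_split_zero_of_mem hX hp hx, if_pos hx2]
    omega
  · have hy1 := totalDeg_split_one_le_of_not_mem hp hy hN
    rw [(splitVertexColor_eq_one_iff hx).2 hx2, totalDeg_split_one_of_mem hX hp hx, if_neg hx2]
    omega

theorem isTLIR_split (hX : G.IsClique X) (hY : ∀ u ∈ Xᶜ, ∀ w ∈ Xᶜ, ¬ G.Adj u w)
    (hp : IsValleyOrder X m p (degreeOutside G X)) :
    IsTLIR G (splitVertexColor X m p) (splitEdgeColor X m p) := by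
  have hN (y : V) (hy : y ∉ X) (u : V) (hyu : G.Adj y u) : u ∈ X :=
    by_contra fun hu => hY y hy u hu hyu
  intro u v huv
  by_cases hu : u ∈ X <;> by_cases hv : v ∈ X
  · exact totalDeg_split_ne_of_mem hX hp hu hv huv.ne _
  · exact totalDeg_split_ne_of_not_mem hX hp.bijOn hu hv (hN v hv) huv
  · rw [Sym2.eq_swap]
    exact (totalDeg_split_ne_of_not_mem hX hp.bijOn hv hu (hN u hu) huv.symm).symm
  · exact absurd huv (hY u hu v hv)

end SplitTotalDegree

/-- Every finite split graph (vertices can be partitioned into a clique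
and an independent set) admits a locally irregular total coloring with 2 colors,
i.e. `tlir(G) ≤ 2`. -/
theorem stmt5 {V : Type*} [Fintype V] (G : SimpleGraph V) (X : Set V)
    (hclique : G.IsClique X)
    (hindep : ∀ u ∈ Xᶜ, ∀ w ∈ Xᶜ, ¬ G.Adj u w) : HasTLIR G 2 := by
  obtain ⟨m, p, hp⟩ := exists_isValleyOrder X (degreeOutside G X)
  exact ⟨_, _, isTLIR_split hclique hindep hp⟩
end

section
/- Let G be a finite bipartite simple graph with bipartition (X, Y) in which no vertex of Y is isolated. Then there is a partial locally irregular total coloring of G with two colors, red and blue, such that: (i) every vertex of X is colored (red or blue); (ii) every vertex of X has even total red degree; (iii) every vertex of Y is uncolored; (iv) every vertex of Y is incident to an odd number of red edges; and (v) the uncolored edges form a matching. -/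
open Finset
open scoped Classical

variable {V : Type*}

/-- The total degree of a vertex `v` in color `i : Bool` (with `true` = red and
`false` = blue), given a partial vertex coloring `cV` and a partial edge coloring
`cE` (where `none` means uncolored): the number of edges of color `i` incident to
`v`, plus `1` if `v` itself is colored `i`. -/
noncomputable def ptotalDeg [Fintype V] (G : SimpleGraph V)
    (cV : V → Option Bool) (cE : Sym2 V → Option Bool) (i : Bool) (v : V) : ℕ :=
  (univ.filter fun u => G.Adj v u ∧ cE s(v, u) = some i).card +
    (if cV v = some i then 1 else 0)

/-- A partial total coloring is locally irregular if for every edge `uv` colored `i`,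
the total degrees of `u` and `v` in color `i` are distinct. -/
def IsPartialTLIR [Fintype V] (G : SimpleGraph V)
    (cV : V → Option Bool) (cE : Sym2 V → Option Bool) : Prop :=
  ∀ u v, G.Adj u v → ∀ i : Bool, cE s(u, v) = some i →
    ptotalDeg G cV cE i u ≠ ptotalDeg G cV cE i v

section Aux

variable [Fintype V] (G : SimpleGraph V) (M : Finset (Sym2 V)) (Y : Set V)

/-- full degree -/
noncomputable def degf (v : V) : ℕ := (univ.filter fun u => G.Adj v u).card

/-- colored degree: neighbors through non-matching edges -/
noncomputable def dcol (v : V) : ℕ :=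
  (univ.filter fun u => G.Adj v u ∧ s(v, u) ∉ M).card

def samePar (u v : V) : Prop := dcol G M u % 2 = dcol G M v % 2

noncomputable def Sset (y : V) : Finset V :=
  univ.filter fun u => G.Adj y u ∧ s(y, u) ∉ M ∧ samePar G M y u

noncomputable def Dset (y : V) : Finset V :=
  univ.filter fun u => G.Adj y u ∧ s(y, u) ∉ M ∧ ¬ samePar G M y u

noncomputable def extraP (y : V) : V :=
  if h : (Dset G M y).Nonempty then h.choose else y

def extraRel (y u : V) : Prop :=
  y ∈ Y ∧ Even (Sset G M y).card ∧ u = extraP G M y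

noncomputable def fE (u v : V) : Option Bool :=
  if G.Adj u v ∧ s(u, v) ∉ M then
    (if samePar G M u v ∨ extraRel G M Y u v ∨ extraRel G M Y v u
      then some true else some false)
  else none

lemma fE_symm (u v : V) : fE G M Y u v = fE G M Y v u := by
  unfold fE
  have h1 : (G.Adj u v ∧ s(u, v) ∉ M) ↔ (G.Adj v u ∧ s(v, u) ∉ M) := by
    rw [G.adj_comm, Sym2.eq_swap]
  have hsp : samePar G M u v ↔ samePar G M v u := eq_comm
  have h2 : (samePar G M u v ∨ extraRel G M Y u v ∨ extraRel G M Y v u) ↔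
      (samePar G M v u ∨ extraRel G M Y v u ∨ extraRel G M Y u v) := by
    rw [hsp]; tauto
  exact if_congr h1 (if_congr h2 rfl rfl) rfl

noncomputable def cEdef : Sym2 V → Option Bool :=
  Sym2.lift ⟨fE G M Y, fE_symm G M Y⟩

lemma cEdef_mk (u v : V) : cEdef G M Y s(u, v) = fE G M Y u v :=
  Sym2.lift_mk _ _ _

noncomputable def RdegD (v : V) : ℕ :=
  (univ.filter fun u => G.Adj v u ∧ cEdef G M Y s(v, u) = some true).card

noncomputable def BdegD (v : V) : ℕ :=
  (univ.filter fun u => G.Adj v u ∧ cEdef G M Y s(v, u) = some false).card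

noncomputable def cVdef (X : Set V) (v : V) : Option Bool :=
  if v ∈ X then (if Odd (RdegD G M Y v) then some true else some false) else none

def covM (v : V) : Prop := ∃ e ∈ M, v ∈ e

/-- M is a matching consisting of edges ya with y ∈ Y "fully even". -/
def isMat : Prop :=
  (∀ e ∈ M, ∃ a b, e = s(a, b) ∧ G.Adj a b ∧ a ∈ Y ∧ Even (degf G a) ∧
      ∀ u, G.Adj a u → Even (degf G u)) ∧
  (∀ e ∈ M, ∀ f ∈ M, ∀ v, v ∈ e → v ∈ f → e = f)

variable {G M Y}

lemma deg_split (v : V) :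
    dcol G M v + (univ.filter fun u => G.Adj v u ∧ s(v, u) ∈ M).card = degf G v := by
  classical
  unfold dcol degf
  have h := Finset.card_filter_add_card_filter_not
    (s := univ.filter fun u => G.Adj v u) (p := fun u => s(v, u) ∉ M)
  rw [Finset.filter_filter, Finset.filter_filter] at h
  simp only [not_not] at h
  exact h

lemma matched_card_one (hM : isMat G M Y) {v : V} (hv : covM M v) :
    (univ.filter fun u => G.Adj v u ∧ s(v, u) ∈ M).card = 1 := by
  obtain ⟨e, heM, hve⟩ := hv
  obtain ⟨a, b, rfl, hab, -, -, -⟩ := hM.1 e heM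
  -- the partner of v
  rw [Sym2.mem_iff] at hve
  obtain ⟨w, hw, hvw⟩ : ∃ w, G.Adj v w ∧ s(a, b) = s(v, w) := by
    rcases hve with rfl | rfl
    · exact ⟨b, hab, rfl⟩
    · exact ⟨a, hab.symm, Sym2.eq_swap⟩
  have : (univ.filter fun u => G.Adj v u ∧ s(v, u) ∈ M) = {w} := by
    ext u
    simp only [Finset.mem_filter, Finset.mem_univ, true_and, Finset.mem_singleton]
    constructor
    · rintro ⟨hadj, hmem⟩
      have := hM.2 _ hmem _ heM v (Sym2.mem_mk_left v u) (hvw ▸ Sym2.mem_mk_left v w)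
      rw [hvw] at this
      exact Sym2.congr_right.mp this
    · rintro rfl
      exact ⟨hw, hvw ▸ heM⟩
  rw [this, Finset.card_singleton]

lemma unmatched_card_zero {v : V} (hv : ¬ covM M v) :
    (univ.filter fun u => G.Adj v u ∧ s(v, u) ∈ M).card = 0 := by
  rw [Finset.card_eq_zero, Finset.filter_eq_empty_iff]
  rintro u - ⟨-, hmem⟩
  exact hv ⟨_, hmem, Sym2.mem_mk_left v u⟩

lemma dcol_of_unmatched {v : V} (hv : ¬ covM M v) : dcol G M v = degf G v := by
  have := deg_split (G := G) (M := M) v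
  rw [unmatched_card_zero hv] at this
  omega

lemma dcol_of_matched (hM : isMat G M Y) {v : V} (hv : covM M v) :
    dcol G M v + 1 = degf G v := by
  have := deg_split (G := G) (M := M) v
  rw [matched_card_one hM hv] at this
  omega

lemma matched_even (hM : isMat G M Y) {v : V} (hv : covM M v) : Even (degf G v) := by
  obtain ⟨e, heM, hve⟩ := hv
  obtain ⟨a, b, rfl, hab, -, hea, hnb⟩ := hM.1 e heM
  rw [Sym2.mem_iff] at hve
  rcases hve with rfl | rfl
  · exact hea
  · exact hnb _ hab


lemma SD_union (y : V) :
    Sset G M y ∪ Dset G M y = univ.filter fun u => G.Adj y u ∧ s(y, u) ∉ M := by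
  unfold Sset Dset
  rw [← Finset.filter_or]
  apply Finset.filter_congr
  intro u _
  constructor
  · rintro (⟨h1, h2, -⟩ | ⟨h1, h2, -⟩) <;> exact ⟨h1, h2⟩
  · rintro ⟨h1, h2⟩
    by_cases hsp : samePar G M y u
    · exact Or.inl ⟨h1, h2, hsp⟩
    · exact Or.inr ⟨h1, h2, hsp⟩

lemma star (hM : isMat G M Y)
    (hmax : ∀ a b, G.Adj a b → a ∈ Y → Even (degf G a) →
      (∀ u, G.Adj a u → Even (degf G u)) → ¬ covM M a → ¬ covM M b → False)
    {y : V} (hy : y ∈ Y) (hiso : ∃ x, G.Adj y x)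
    (hev : Even (Sset G M y).card) : (Dset G M y).Nonempty := by
  by_contra hne
  rw [Finset.not_nonempty_iff_eq_empty] at hne
  have hSall : Sset G M y = univ.filter fun u => G.Adj y u ∧ s(y, u) ∉ M := by
    rw [← SD_union y, hne, Finset.union_empty]
  have hdcol : dcol G M y = (Sset G M y).card := by rw [hSall]; rfl
  have hdcol_even : Even (dcol G M y) := hdcol ▸ hev
  have hcovy : ¬ covM M y := by
    intro hc
    have h1 := dcol_of_matched hM hc
    have h2 := matched_even hM hc
    rw [Nat.even_iff] at h2 hdcol_even
    omega
  have hdeg : dcol G M y = degf G y := dcol_of_unmatched hcovy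
  have hnbr : ∀ u, G.Adj y u → u ∈ Sset G M y := by
    intro u hu
    rw [hSall]
    simp only [Finset.mem_filter, Finset.mem_univ, true_and]
    exact ⟨hu, fun hmem => hcovy ⟨_, hmem, Sym2.mem_mk_left y u⟩⟩
  have hnbreven : ∀ u, G.Adj y u → Even (degf G u) := by
    intro u hu
    by_cases hcu : covM M u
    · exact matched_even hM hcu
    · have h1 : dcol G M u = degf G u := dcol_of_unmatched hcu
      have h2 := hnbr u hu
      unfold Sset at h2
      simp only [Finset.mem_filter, Finset.mem_univ, true_and] at h2
      have h3 : dcol G M y % 2 = dcol G M u % 2 := h2.2.2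
      rw [Nat.even_iff] at hdcol_even ⊢
      omega
  obtain ⟨u0, hu0⟩ := hiso
  by_cases hcu : covM M u0
  · have h1 := dcol_of_matched hM hcu
    have h2 := matched_even hM hcu
    have h3 := hnbr u0 hu0
    unfold Sset at h3
    simp only [Finset.mem_filter, Finset.mem_univ, true_and] at h3
    have h4 : dcol G M y % 2 = dcol G M u0 % 2 := h3.2.2
    rw [Nat.even_iff] at h2 hdcol_even
    omega
  · exact hmax y u0 hu0 hy (hdeg ▸ hdcol_even) hnbreven hcovy hcu

lemma extraP_mem (hM : isMat G M Y)
    (hmax : ∀ a b, G.Adj a b → a ∈ Y → Even (degf G a) →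
      (∀ u, G.Adj a u → Even (degf G u)) → ¬ covM M a → ¬ covM M b → False)
    {y : V} (hy : y ∈ Y) (hiso : ∃ x, G.Adj y x)
    (hev : Even (Sset G M y).card) : extraP G M y ∈ Dset G M y := by
  have hne := star hM hmax hy hiso hev
  unfold extraP
  rw [dif_pos hne]
  exact hne.choose_spec

lemma red_char (hM : isMat G M Y)
    (hmax : ∀ a b, G.Adj a b → a ∈ Y → Even (degf G a) →
      (∀ u, G.Adj a u → Even (degf G u)) → ¬ covM M a → ¬ covM M b → False)
    {X : Set V} (hdisj : Disjoint X Y)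
    (hbip : ∀ u v, G.Adj u v → (u ∈ X ∧ v ∈ Y) ∨ (u ∈ Y ∧ v ∈ X))
    {y : V} (hy : y ∈ Y) (hiso : ∃ x, G.Adj y x) :
    Odd (RdegD G M Y y) := by
  have hnotY : ∀ u, G.Adj y u → u ∉ Y := by
    intro u hu
    rcases hbip y u hu with ⟨hyX, -⟩ | ⟨-, huX⟩
    · exact absurd hy (Set.disjoint_left.mp hdisj hyX)
    · exact Set.disjoint_left.mp hdisj huX
  have hmem : ∀ u, (G.Adj y u ∧ cEdef G M Y s(y, u) = some true) ↔
      (u ∈ Sset G M y ∨ (Even (Sset G M y).card ∧ u = extraP G M y)) := by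
    intro u
    constructor
    · rintro ⟨hadj, hred⟩
      rw [cEdef_mk] at hred
      unfold fE at hred
      by_cases hc : G.Adj y u ∧ s(y, u) ∉ M
      · rw [if_pos hc] at hred
        by_cases hc2 : samePar G M y u ∨ extraRel G M Y y u ∨ extraRel G M Y u y
        · rcases hc2 with hsp | hex | hex
          · left
            unfold Sset
            simp only [Finset.mem_filter, Finset.mem_univ, true_and]
            exact ⟨hc.1, hc.2, hsp⟩
          · exact Or.inr ⟨hex.2.1, hex.2.2⟩
          · exact absurd hex.1 (hnotY u hadj)
        · rw [if_neg hc2] at hred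
          simp at hred
      · rw [if_neg hc] at hred
        simp at hred
    · intro h
      have hand : G.Adj y u ∧ s(y, u) ∉ M ∧
          (samePar G M y u ∨ extraRel G M Y y u ∨ extraRel G M Y u y) := by
        rcases h with hS | ⟨hev, rfl⟩
        · unfold Sset at hS
          simp only [Finset.mem_filter, Finset.mem_univ, true_and] at hS
          exact ⟨hS.1, hS.2.1, Or.inl hS.2.2⟩
        · have hP := extraP_mem hM hmax hy hiso hev
          unfold Dset at hP
          simp only [Finset.mem_filter, Finset.mem_univ, true_and] at hP
          exact ⟨hP.1, hP.2.1, Or.inr (Or.inl ⟨hy, hev, rfl⟩)⟩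
      refine ⟨hand.1, ?_⟩
      rw [cEdef_mk]
      unfold fE
      rw [if_pos ⟨hand.1, hand.2.1⟩, if_pos hand.2.2]
  by_cases hev : Even (Sset G M y).card
  · have hP := extraP_mem hM hmax hy hiso hev
    have hPS : extraP G M y ∉ Sset G M y := by
      unfold Dset at hP
      unfold Sset
      simp only [Finset.mem_filter, Finset.mem_univ, true_and] at hP ⊢
      intro hS
      exact hP.2.2 hS.2.2
    have heq : (univ.filter fun u => G.Adj y u ∧ cEdef G M Y s(y, u) = some true)
        = insert (extraP G M y) (Sset G M y) := by
      ext u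
      simp only [Finset.mem_filter, Finset.mem_univ, true_and, Finset.mem_insert]
      rw [hmem u]
      constructor
      · rintro (h | ⟨-, rfl⟩)
        exacts [Or.inr h, Or.inl rfl]
      · rintro (rfl | h)
        exacts [Or.inr ⟨hev, rfl⟩, Or.inl h]
    unfold RdegD
    rw [heq, Finset.card_insert_of_notMem hPS]
    exact Even.add_one hev
  · have heq : (univ.filter fun u => G.Adj y u ∧ cEdef G M Y s(y, u) = some true)
        = Sset G M y := by
      ext u
      simp only [Finset.mem_filter, Finset.mem_univ, true_and]
      rw [hmem u]
      constructor
      · rintro (h | ⟨he, -⟩)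
        exacts [h, absurd he hev]
      · exact Or.inl
    unfold RdegD
    rw [heq]
    exact Nat.not_even_iff_odd.mp hev

lemma cE_some_imp {v u : V} {i : Bool} (h : cEdef G M Y s(v, u) = some i) :
    G.Adj v u ∧ s(v, u) ∉ M := by
  rw [cEdef_mk] at h
  unfold fE at h
  by_cases hc : G.Adj v u ∧ s(v, u) ∉ M
  · exact hc
  · rw [if_neg hc] at h
    simp at h

lemma cE_cases {v u : V} (hadj : G.Adj v u) (hnm : s(v, u) ∉ M) :
    cEdef G M Y s(v, u) = some true ∨ cEdef G M Y s(v, u) = some false := by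
  rw [cEdef_mk]
  unfold fE
  rw [if_pos ⟨hadj, hnm⟩]
  by_cases hc : samePar G M v u ∨ extraRel G M Y v u ∨ extraRel G M Y u v
  · left; rw [if_pos hc]
  · right; rw [if_neg hc]

lemma blue_not_samePar {u v : V} (h : cEdef G M Y s(u, v) = some false) :
    ¬ samePar G M u v := by
  rw [cEdef_mk] at h
  unfold fE at h
  by_cases hc : G.Adj u v ∧ s(u, v) ∉ M
  · rw [if_pos hc] at h
    by_cases h2 : samePar G M u v ∨ extraRel G M Y u v ∨ extraRel G M Y v u
    · rw [if_pos h2] at h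
      simp at h
    · exact fun hs => h2 (Or.inl hs)
  · rw [if_neg hc] at h
    simp at h

lemma RB_split (v : V) : RdegD G M Y v + BdegD G M Y v = dcol G M v := by
  unfold RdegD BdegD dcol
  have h := Finset.card_filter_add_card_filter_not
    (s := univ.filter fun u => G.Adj v u ∧ s(v, u) ∉ M)
    (p := fun u => cEdef G M Y s(v, u) = some true)
  rw [Finset.filter_filter, Finset.filter_filter] at h
  have e1 : (univ.filter fun u => (G.Adj v u ∧ s(v, u) ∉ M) ∧ cEdef G M Y s(v, u) = some true)
      = univ.filter fun u => G.Adj v u ∧ cEdef G M Y s(v, u) = some true := by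
    apply Finset.filter_congr
    intro u _
    constructor
    · rintro ⟨⟨h1, -⟩, h3⟩
      exact ⟨h1, h3⟩
    · rintro ⟨h1, h3⟩
      exact ⟨⟨h1, (cE_some_imp h3).2⟩, h3⟩
  have e2 : (univ.filter fun u => (G.Adj v u ∧ s(v, u) ∉ M) ∧ ¬ cEdef G M Y s(v, u) = some true)
      = univ.filter fun u => G.Adj v u ∧ cEdef G M Y s(v, u) = some false := by
    apply Finset.filter_congr
    intro u _
    constructor
    · rintro ⟨⟨h1, h2⟩, h3⟩
      rcases cE_cases h1 h2 with hr | hb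
      · exact absurd hr h3
      · exact ⟨h1, hb⟩
    · rintro ⟨h1, h3⟩
      refine ⟨⟨h1, (cE_some_imp h3).2⟩, ?_⟩
      rw [h3]
      simp
  rw [e1, e2] at h
  exact h


lemma ptotal_true_eq (X : Set V) (v : V) :
    ptotalDeg G (cVdef G M Y X) (cEdef G M Y) true v =
      RdegD G M Y v + (if cVdef G M Y X v = some true then 1 else 0) := rfl

lemma ptotal_false_eq (X : Set V) (v : V) :
    ptotalDeg G (cVdef G M Y X) (cEdef G M Y) false v =
      BdegD G M Y v + (if cVdef G M Y X v = some false then 1 else 0) := rfl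

lemma even_red (X : Set V) {x : V} (hx : x ∈ X) :
    Even (ptotalDeg G (cVdef G M Y X) (cEdef G M Y) true x) := by
  rw [ptotal_true_eq]
  unfold cVdef
  rw [if_pos hx]
  by_cases h : Odd (RdegD G M Y x)
  · rw [if_pos h, if_pos rfl]
    exact h.add_one
  · rw [if_neg h, if_neg (by simp), add_zero]
    exact Nat.not_odd_iff_even.mp h

lemma ptotal_true_Y (X : Set V) {y : V} (hyX : y ∉ X) :
    ptotalDeg G (cVdef G M Y X) (cEdef G M Y) true y = RdegD G M Y y := by
  rw [ptotal_true_eq]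
  unfold cVdef
  rw [if_neg hyX, if_neg (by simp), add_zero]

lemma blue_par_X (X : Set V) {x : V} (hx : x ∈ X) :
    ptotalDeg G (cVdef G M Y X) (cEdef G M Y) false x % 2 = (dcol G M x + 1) % 2 := by
  have hsplit := RB_split (G := G) (M := M) (Y := Y) x
  rw [ptotal_false_eq]
  unfold cVdef
  rw [if_pos hx]
  by_cases h : Odd (RdegD G M Y x)
  · rw [if_pos h, if_neg (by simp), add_zero]
    rw [Nat.odd_iff] at h
    omega
  · rw [if_neg h, if_pos rfl]
    rw [Nat.odd_iff] at h
    omega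

lemma blue_par_Y (X : Set V) {y : V} (hyX : y ∉ X) (hOdd : Odd (RdegD G M Y y)) :
    ptotalDeg G (cVdef G M Y X) (cEdef G M Y) false y % 2 = (dcol G M y + 1) % 2 := by
  have hsplit := RB_split (G := G) (M := M) (Y := Y) y
  rw [ptotal_false_eq]
  unfold cVdef
  rw [if_neg hyX, if_neg (by simp), add_zero]
  rw [Nat.odd_iff] at hOdd
  omega

end Aux

/-- Every finite bipartite graph with bipartition `(X, Y)` in which no
vertex of `Y` is isolated admits a partial locally irregular red-blue total coloring
(red = `true`) such that: (i) every vertex of `X` is colored; (ii) every vertex of `X`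
has even total red degree; (iii) every vertex of `Y` is uncolored; (iv) every vertex
of `Y` is incident to an odd number of red edges; (v) the uncolored edges form a
matching. -/
theorem stmt6 {V : Type*} [Fintype V] (G : SimpleGraph V) (X Y : Set V)
    (hdisj : Disjoint X Y) (hcover : X ∪ Y = Set.univ)
    (hbip : ∀ u v, G.Adj u v → (u ∈ X ∧ v ∈ Y) ∨ (u ∈ Y ∧ v ∈ X))
    (hYnotiso : ∀ y ∈ Y, ∃ x, G.Adj y x) :
    ∃ (cV : V → Option Bool) (cE : Sym2 V → Option Bool),
      IsPartialTLIR G cV cE ∧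
      (∀ x ∈ X, (cV x).isSome) ∧
      (∀ x ∈ X, Even (ptotalDeg G cV cE true x)) ∧
      (∀ y ∈ Y, cV y = none) ∧
      (∀ y ∈ Y, Odd (univ.filter fun u => G.Adj y u ∧ cE s(y, u) = some true).card) ∧
      (∀ a b c, G.Adj a b → G.Adj a c →
        cE s(a, b) = none → cE s(a, c) = none → b = c) := by
  classical
  obtain ⟨M, hMmem, hMcard⟩ := Finset.exists_max_image
    (univ.filter fun m : Finset (Sym2 V) => isMat G m Y) Finset.card
    ⟨∅, Finset.mem_filter.mpr ⟨Finset.mem_univ _,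
      ⟨fun e he => absurd he (Finset.notMem_empty e),
       fun e he => absurd he (Finset.notMem_empty e)⟩⟩⟩
  have hM : isMat G M Y := (Finset.mem_filter.mp hMmem).2
  have hmax : ∀ a b, G.Adj a b → a ∈ Y → Even (degf G a) →
      (∀ u, G.Adj a u → Even (degf G u)) → ¬ covM M a → ¬ covM M b → False := by
    intro a b hab haY hev hall hca hcb
    have hnm : s(a, b) ∉ M := fun h => hca ⟨_, h, Sym2.mem_mk_left a b⟩
    have hM' : isMat G (insert s(a, b) M) Y := by
      constructor
      · intro e he
        rcases Finset.mem_insert.mp he with rfl | heM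
        · exact ⟨a, b, rfl, hab, haY, hev, hall⟩
        · exact hM.1 e heM
      · intro e he f hf v hve hvf
        rcases Finset.mem_insert.mp he with rfl | heM <;>
          rcases Finset.mem_insert.mp hf with rfl | hfM
        · rfl
        · exfalso
          rcases Sym2.mem_iff.mp hve with rfl | rfl
          · exact hca ⟨f, hfM, hvf⟩
          · exact hcb ⟨f, hfM, hvf⟩
        · exfalso
          rcases Sym2.mem_iff.mp hvf with rfl | rfl
          · exact hca ⟨e, heM, hve⟩
          · exact hcb ⟨e, heM, hve⟩
        · exact hM.2 e heM f hfM v hve hvf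
    have hcard := hMcard (insert s(a, b) M)
      (Finset.mem_filter.mpr ⟨Finset.mem_univ _, hM'⟩)
    rw [Finset.card_insert_of_notMem hnm] at hcard
    omega
  have hYX : ∀ y ∈ Y, y ∉ X := fun y hy hyX => Set.disjoint_left.mp hdisj hyX hy
  have hRodd : ∀ y ∈ Y, Odd (RdegD G M Y y) := fun y hy =>
    red_char hM hmax hdisj hbip hy (hYnotiso y hy)
  refine ⟨cVdef G M Y X, cEdef G M Y, ?_, ?_, ?_, ?_, ?_, ?_⟩
  · -- IsPartialTLIR
    have key : ∀ x y, x ∈ X → y ∈ Y → G.Adj x y → ∀ i : Bool,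
        cEdef G M Y s(x, y) = some i →
        ptotalDeg G (cVdef G M Y X) (cEdef G M Y) i x ≠
          ptotalDeg G (cVdef G M Y X) (cEdef G M Y) i y := by
      intro x y hx hy hadj i hcol
      cases i
      · -- blue
        have hnsp : ¬ samePar G M x y := blue_not_samePar hcol
        unfold samePar at hnsp
        have h1 := blue_par_X (G := G) (M := M) (Y := Y) X hx
        have h2 := blue_par_Y (G := G) (M := M) (Y := Y) X (hYX y hy) (hRodd y hy)
        intro heq
        rw [heq, h2] at h1
        omega
      · -- red
        have h1 := even_red (G := G) (M := M) (Y := Y) X hx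
        have h2 : Odd (ptotalDeg G (cVdef G M Y X) (cEdef G M Y) true y) := by
          rw [ptotal_true_Y X (hYX y hy)]
          exact hRodd y hy
        intro heq
        rw [heq] at h1
        rw [Nat.even_iff] at h1
        rw [Nat.odd_iff] at h2
        omega
    intro u v hadj i hcol
    rcases hbip u v hadj with ⟨huX, hvY⟩ | ⟨huY, hvX⟩
    · exact key u v huX hvY hadj i hcol
    · exact (key v u hvX huY hadj.symm i (by rwa [Sym2.eq_swap])).symm
  · intro x hx
    unfold cVdef
    rw [if_pos hx]
    split <;> rfl
  · intro x hx
    exact even_red X hx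
  · intro y hy
    unfold cVdef
    rw [if_neg (hYX y hy)]
  · intro y hy
    exact hRodd y hy
  · intro a b c hab hac h1 h2
    have e1 : s(a, b) ∈ M := by
      by_contra hmem
      rcases cE_cases (Y := Y) hab hmem with h | h <;> rw [h1] at h <;> simp at h
    have e2 : s(a, c) ∈ M := by
      by_contra hmem
      rcases cE_cases (Y := Y) hac hmem with h | h <;> rw [h2] at h <;> simp at h
    have := hM.2 _ e1 _ e2 a (Sym2.mem_mk_left a b) (Sym2.mem_mk_left a c)
    exact Sym2.congr_right.mp this
end

section
/- For every finite simple graph G with chromatic number χ(G) ≥ 2, the locally irregular total chromatic index satisfies tlir(G) ≤ 2·χ(G) − 2. -/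
open Finset
open scoped Classical

variable {V : Type*}

namespace TLIR

variable [Fintype V] (G : SimpleGraph V) (c : V → ℕ) (n : ℕ)

/-- degree of `w` inside step `i` (edges whose lower endpoint class is `i`). -/
noncomputable def Di (i : ℕ) (w : V) : ℕ :=
  (univ.filter fun z => G.Adj w z ∧ min (c w) (c z) = i).card

/-- `z` has the same step-`i` degree parity as `x`. -/
def sP (i : ℕ) (x z : V) : Prop := Di G c i z % 2 = Di G c i x % 2

noncomputable def mixedSet (i : ℕ) (x : V) : Finset V :=
  univ.filter fun z => G.Adj x z ∧ c z = i ∧ ¬ sP G c i x z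

noncomputable def sCnt (i : ℕ) (x : V) : ℕ :=
  (univ.filter fun z => G.Adj x z ∧ c z = i ∧ sP G c i x z).card

noncomputable def pick (i : ℕ) (x : V) : V :=
  if h : (mixedSet G c i x).Nonempty then h.choose else x

/-- the edge from high vertex `x` down to low vertex `z` (class `i`) gets color `aᵢ`. -/
def inS (i : ℕ) (x z : V) : Prop :=
  (mixedSet G c i x).Nonempty ∧
    (sP G c i x z ∨ (sCnt G c i x % 2 = 0 ∧ z = pick G c i x))

/-- ℕ-encoded color of an edge with low endpoint `y` and high endpoint `x`. -/
noncomputable def gE (x y : V) : ℕ :=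
  if c y = n - 2 then c y
  else if inS G c (c y) x y then c y else (n - 1) + c y

noncomputable def eCol (u v : V) : ℕ :=
  if c u < c v then gE G c n v u
  else if c v < c u then gE G c n u v
  else 0

noncomputable def DSl (v : V) : ℕ :=
  (univ.filter fun z => G.Adj v z ∧ c v < c z ∧ inS G c (c v) z v).card

noncomputable def cVN (v : V) : ℕ :=
  if c v = n - 2 then (if Di G c (n - 2) v % 2 = 0 then n - 2 else (n - 1) + (n - 2))
  else if n - 2 < c v then (if Di G c (n - 2) v % 2 = 1 then n - 2 else (n - 1) + (n - 2))
  else (if DSl G c v % 2 = 1 then c v else (n - 1) + c v)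

lemma eCol_symm (u v : V) : eCol G c n u v = eCol G c n v u := by
  unfold eCol
  rcases lt_trichotomy (c u) (c v) with h | h | h
  · rw [if_pos h, if_neg (by omega), if_pos h]
  · rw [if_neg (by omega), if_neg (by omega), if_neg (by omega), if_neg (by omega)]
  · rw [if_neg (by omega), if_pos h, if_pos h]

lemma gE_bound {x y : V} (hy : c y ≤ n - 2) (hn : 2 ≤ n) : gE G c n x y < 2 * n - 2 := by
  unfold gE; split_ifs <;> omega

lemma eCol_lt (hn : 2 ≤ n) (hlt : ∀ w, c w < n) (u v : V) : eCol G c n u v < 2 * n - 2 := by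
  unfold eCol
  have h1 := hlt u; have h2 := hlt v
  split_ifs with h h'
  · exact gE_bound G c n (by omega) hn
  · exact gE_bound G c n (by omega) hn
  · omega

lemma cVN_lt (hn : 2 ≤ n) (hlt : ∀ w, c w < n) (v : V) : cVN G c n v < 2 * n - 2 := by
  unfold cVN; have := hlt v; split_ifs <;> omega

lemma Di_low (hprop : ∀ ⦃a b⦄, G.Adj a b → c a ≠ c b) (y : V) :
    Di G c (c y) y = (univ.filter fun z => G.Adj y z ∧ c y < c z).card := by
  unfold Di
  congr 1
  apply filter_congr
  intro z _
  constructor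
  · rintro ⟨ha, hm⟩; exact ⟨ha, by have := hprop ha; omega⟩
  · rintro ⟨ha, hm⟩; exact ⟨ha, by omega⟩

lemma Di_high {i : ℕ} {x : V} (hix : i < c x) :
    Di G c i x = (univ.filter fun z => G.Adj x z ∧ c z = i).card := by
  unfold Di
  congr 1
  apply filter_congr
  intro z _
  constructor
  · rintro ⟨ha, hm⟩; exact ⟨ha, by omega⟩
  · rintro ⟨ha, hm⟩; exact ⟨ha, by omega⟩

lemma split_low (hprop : ∀ ⦃a b⦄, G.Adj a b → c a ≠ c b) (y : V) :
    (univ.filter fun z => G.Adj y z ∧ c y < c z ∧ inS G c (c y) z y).card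
      + (univ.filter fun z => G.Adj y z ∧ c y < c z ∧ ¬ inS G c (c y) z y).card
      = Di G c (c y) y := by
  rw [Di_low G c hprop y]
  have h1 : (univ.filter fun z => G.Adj y z ∧ c y < c z ∧ inS G c (c y) z y)
      = (univ.filter fun z => G.Adj y z ∧ c y < c z).filter
          (fun z => inS G c (c y) z y) := by
    rw [filter_filter]
    apply filter_congr
    intro z _
    tauto
  have h2 : (univ.filter fun z => G.Adj y z ∧ c y < c z ∧ ¬ inS G c (c y) z y)
      = (univ.filter fun z => G.Adj y z ∧ c y < c z).filter
          (fun z => ¬ inS G c (c y) z y) := by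
    rw [filter_filter]
    apply filter_congr
    intro z _
    tauto
  rw [h1, h2, card_filter_add_card_filter_not]

lemma split_high {i : ℕ} {x : V} (hix : i < c x) :
    (univ.filter fun z => G.Adj x z ∧ c z = i ∧ inS G c i x z).card
      + (univ.filter fun z => G.Adj x z ∧ c z = i ∧ ¬ inS G c i x z).card
      = Di G c i x := by
  rw [Di_high G c hix]
  have h1 : (univ.filter fun z => G.Adj x z ∧ c z = i ∧ inS G c i x z)
      = (univ.filter fun z => G.Adj x z ∧ c z = i).filter (fun z => inS G c i x z) := by
    rw [filter_filter]
    apply filter_congr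
    intro z _
    tauto
  have h2 : (univ.filter fun z => G.Adj x z ∧ c z = i ∧ ¬ inS G c i x z)
      = (univ.filter fun z => G.Adj x z ∧ c z = i).filter (fun z => ¬ inS G c i x z) := by
    rw [filter_filter]
    apply filter_congr
    intro z _
    tauto
  rw [h1, h2, card_filter_add_card_filter_not]

lemma DS_pure {i : ℕ} {x : V} (h : ¬ (mixedSet G c i x).Nonempty) :
    (univ.filter fun z => G.Adj x z ∧ c z = i ∧ inS G c i x z).card = 0 := by
  rw [card_eq_zero, filter_eq_empty_iff]
  rintro z - ⟨-, -, hne, -⟩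
  exact h hne

lemma sP_of_pure {i : ℕ} {x y : V} (hadj : G.Adj x y) (hcy : c y = i)
    (h : ¬ (mixedSet G c i x).Nonempty) : sP G c i x y := by
  by_contra hsp
  exact h ⟨y, by simp only [mixedSet, mem_filter, mem_univ, true_and]; exact ⟨hadj, hcy, hsp⟩⟩

lemma DS_odd {i : ℕ} {x : V} (hne : (mixedSet G c i x).Nonempty) :
    (univ.filter fun z => G.Adj x z ∧ c z = i ∧ inS G c i x z).card % 2 = 1 := by
  have hpk : pick G c i x ∈ mixedSet G c i x := by
    unfold pick
    rw [dif_pos hne]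
    exact hne.choose_spec
  simp only [mixedSet, mem_filter, mem_univ, true_and] at hpk
  obtain ⟨hadj, hci, hnsp⟩ := hpk
  have hsc : (univ.filter fun z => G.Adj x z ∧ c z = i ∧ sP G c i x z).card = sCnt G c i x := rfl
  by_cases hpar : sCnt G c i x % 2 = 0
  · have hset : (univ.filter fun z => G.Adj x z ∧ c z = i ∧ inS G c i x z)
        = insert (pick G c i x) (univ.filter fun z => G.Adj x z ∧ c z = i ∧ sP G c i x z) := by
      ext z
      simp only [mem_filter, mem_insert, mem_univ, true_and]
      constructor
      · rintro ⟨ha, hc, -, hsp | ⟨-, hz⟩⟩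
        · exact Or.inr ⟨ha, hc, hsp⟩
        · exact Or.inl hz
      · rintro (rfl | ⟨ha, hc, hsp⟩)
        · exact ⟨hadj, hci, hne, Or.inr ⟨hpar, rfl⟩⟩
        · exact ⟨ha, hc, hne, Or.inl hsp⟩
    rw [hset, card_insert_of_notMem (by
      simp only [mem_filter, mem_univ, true_and]
      rintro ⟨-, -, h⟩
      exact hnsp h), hsc]
    omega
  · have hset : (univ.filter fun z => G.Adj x z ∧ c z = i ∧ inS G c i x z)
        = (univ.filter fun z => G.Adj x z ∧ c z = i ∧ sP G c i x z) := by
      ext z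
      simp only [mem_filter, mem_univ, true_and]
      constructor
      · rintro ⟨ha, hc, -, hsp | ⟨he, -⟩⟩
        · exact ⟨ha, hc, hsp⟩
        · exact absurd he hpar
      · rintro ⟨ha, hc, hsp⟩
        exact ⟨ha, hc, hne, Or.inl hsp⟩
    rw [hset, hsc]
    omega

lemma gE_L {x y : V} (h : c y = n - 2) : gE G c n x y = c y := if_pos h

lemma gE_S {x y : V} (h : ¬ c y = n - 2) (hs : inS G c (c y) x y) : gE G c n x y = c y := by
  unfold gE; rw [if_neg h, if_pos hs]

lemma gE_T {x y : V} (h : ¬ c y = n - 2) (hs : ¬ inS G c (c y) x y) :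
    gE G c n x y = (n - 1) + c y := by
  unfold gE; rw [if_neg h, if_neg hs]

lemma gE_or (x y : V) : gE G c n x y = c y ∨ gE G c n x y = (n - 1) + c y := by
  unfold gE; split_ifs <;> simp

lemma eCol_lt' {w z : V} (h : c w < c z) : eCol G c n w z = gE G c n z w := if_pos h

lemma eCol_gt' {w z : V} (h : c z < c w) : eCol G c n w z = gE G c n w z := by
  unfold eCol; rw [if_neg (by omega), if_pos h]

theorem key (hn : 2 ≤ n) (hlt : ∀ w, c w < n)
    (hprop : ∀ ⦃a b⦄, G.Adj a b → c a ≠ c b)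
    {m : ℕ} (cVf : V → Fin m) (cEf : Sym2 V → Fin m)
    (hcE : ∀ a b, ((cEf s(a, b)) : ℕ) = eCol G c n a b)
    (hcV : ∀ w, ((cVf w) : ℕ) = cVN G c n w)
    {u v : V} (huv : G.Adj u v) (hcuv : c u < c v) :
    totalDeg G cVf cEf (cEf s(u, v)) u ≠ totalDeg G cVf cEf (cEf s(u, v)) v := by
  have hcu := hlt u
  have hcv := hlt v
  set T : ℕ := eCol G c n u v with hTdef
  have hTeq : T = gE G c n v u := eCol_lt' G c n hcuv
  have hTD : ∀ w, totalDeg G cVf cEf (cEf s(u, v)) w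
      = (univ.filter fun z => G.Adj w z ∧ eCol G c n w z = T).card
        + (if cVN G c n w = T then 1 else 0) := by
    intro w
    unfold totalDeg
    congr 1
    · congr 1
      apply filter_congr
      intro z _
      exact and_congr_right fun _ => by rw [← Fin.val_eq_val, hcE, hcE, ← hTdef]
    · exact if_congr (by rw [← Fin.val_eq_val, hcV, hcE, ← hTdef]) rfl rfl
  rw [hTD u, hTD v]
  by_cases hL : c u = n - 2
  · -- CASE last step
    have hTL : T = c u := by rw [hTeq, gE_L G c n hL]
    have hfu : (univ.filter fun z => G.Adj u z ∧ eCol G c n u z = T)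
        = (univ.filter fun z => G.Adj u z ∧ c u < c z) := by
      apply filter_congr
      intro z _
      refine and_congr_right fun hadj => ?_
      have hz := hlt z
      have hne := hprop hadj
      constructor
      · intro hcol
        by_contra hzc
        have h1 : c z < c u := by omega
        rw [eCol_gt' G c n h1] at hcol
        rcases gE_or G c n u z with h2 | h2 <;> omega
      · intro hzc
        rw [eCol_lt' G c n hzc, gE_L G c n hL, hTL]
    have hfv : (univ.filter fun z => G.Adj v z ∧ eCol G c n v z = T)
        = (univ.filter fun z => G.Adj v z ∧ c z = n - 2) := by
      apply filter_congr
      intro z _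
      refine and_congr_right fun hadj => ?_
      have hz := hlt z
      have hne := hprop hadj
      constructor
      · intro hcol
        by_contra hzc
        rcases lt_trichotomy (c v) (c z) with h1 | h1 | h1
        · rw [eCol_lt' G c n h1] at hcol
          rcases gE_or G c n z v with h2 | h2 <;> omega
        · omega
        · rw [eCol_gt' G c n h1] at hcol
          by_cases hzL : c z = n - 2
          · exact hzc hzL
          · by_cases hss : inS G c (c z) v z
            · rw [gE_S G c n hzL hss] at hcol; omega
            · rw [gE_T G c n hzL hss] at hcol; omega
      · intro hzc
        have h1 : c z < c v := by omega
        rw [eCol_gt' G c n h1, gE_L G c n hzc, hTL]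
        omega
    rw [hfu, hfv, ← Di_low G c hprop u, ← Di_high G c (show n - 2 < c v by omega)]
    have hvu : cVN G c n u
        = (if Di G c (n - 2) u % 2 = 0 then n - 2 else (n - 1) + (n - 2)) := by
      unfold cVN
      rw [if_pos hL]
    have hvv : cVN G c n v
        = (if Di G c (n - 2) v % 2 = 1 then n - 2 else (n - 1) + (n - 2)) := by
      unfold cVN
      rw [if_neg (show ¬ c v = n - 2 by omega), if_pos (show n - 2 < c v by omega)]
    have hiu : (if cVN G c n u = T then 1 else 0)
        = (if Di G c (n - 2) u % 2 = 0 then 1 else 0) := by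
      rw [hvu, hTL, hL]
      split_ifs <;> omega
    have hiv : (if cVN G c n v = T then 1 else 0)
        = (if Di G c (n - 2) v % 2 = 1 then 1 else 0) := by
      rw [hvv, hTL, hL]
      split_ifs <;> omega
    rw [hiu, hiv, hL]
    split_ifs <;> omega
  · -- CASE i < n-2
    have hiL : c u < n - 2 := by omega
    by_cases hS : inS G c (c u) v u
    · -- color a_i
      have hTi : T = c u := by rw [hTeq, gE_S G c n hL hS]
      have hfu : (univ.filter fun z => G.Adj u z ∧ eCol G c n u z = T)
          = (univ.filter fun z => G.Adj u z ∧ c u < c z ∧ inS G c (c u) z u) := by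
        apply filter_congr
        intro z _
        refine and_congr_right fun hadj => ?_
        have hz := hlt z
        have hne := hprop hadj
        constructor
        · intro hcol
          rcases lt_trichotomy (c u) (c z) with h1 | h1 | h1
          · refine ⟨h1, ?_⟩
            rw [eCol_lt' G c n h1] at hcol
            by_cases hss : inS G c (c u) z u
            · exact hss
            · rw [gE_T G c n hL hss] at hcol; omega
          · omega
          · exfalso
            rw [eCol_gt' G c n h1] at hcol
            rcases gE_or G c n u z with h2 | h2 <;> omega
        · rintro ⟨h1, hss⟩
          rw [eCol_lt' G c n h1, gE_S G c n hL hss, hTi]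
      have hfv : (univ.filter fun z => G.Adj v z ∧ eCol G c n v z = T)
          = (univ.filter fun z => G.Adj v z ∧ c z = c u ∧ inS G c (c u) v z) := by
        apply filter_congr
        intro z _
        refine and_congr_right fun hadj => ?_
        have hz := hlt z
        have hne := hprop hadj
        constructor
        · intro hcol
          rcases lt_trichotomy (c v) (c z) with h1 | h1 | h1
          · exfalso
            rw [eCol_lt' G c n h1] at hcol
            rcases gE_or G c n z v with h2 | h2 <;> omega
          · omega
          · rw [eCol_gt' G c n h1] at hcol
            by_cases hzL : c z = n - 2
            · rw [gE_L G c n hzL] at hcol; omega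
            · by_cases hss : inS G c (c z) v z
              · rw [gE_S G c n hzL hss] at hcol
                have h3 : c z = c u := by omega
                rw [h3] at hss
                exact ⟨h3, hss⟩
              · rw [gE_T G c n hzL hss] at hcol; omega
        · rintro ⟨h1, hss⟩
          have h2 : c z < c v := by omega
          rw [eCol_gt' G c n h2, hTi]
          rw [← h1] at hss ⊢
          exact gE_S G c n (by omega) hss
      rw [hfu, hfv]
      have hDSu : (univ.filter fun z => G.Adj u z ∧ c u < c z ∧ inS G c (c u) z u).card
          = DSl G c u := rfl
      rw [hDSu]
      have hodd : (univ.filter fun z => G.Adj v z ∧ c z = c u ∧ inS G c (c u) v z).card % 2 = 1 :=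
        DS_odd G c hS.1
      have hvu : cVN G c n u
          = (if DSl G c u % 2 = 1 then c u else (n - 1) + c u) := by
        unfold cVN
        rw [if_neg hL, if_neg (show ¬ n - 2 < c u by omega)]
      have hiu : (if cVN G c n u = T then 1 else 0)
          = (if DSl G c u % 2 = 1 then 1 else 0) := by
        rw [hvu, hTi]
        split_ifs <;> omega
      have hnv : ¬ cVN G c n v = T := by
        unfold cVN
        rw [hTi]
        split_ifs <;> omega
      rw [hiu, if_neg hnv]
      split_ifs <;> omega
    · -- color b_i
      have hTk : T = (n - 1) + c u := by rw [hTeq, gE_T G c n hL hS]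
      have hfu : (univ.filter fun z => G.Adj u z ∧ eCol G c n u z = T)
          = (univ.filter fun z => G.Adj u z ∧ c u < c z ∧ ¬ inS G c (c u) z u) := by
        apply filter_congr
        intro z _
        refine and_congr_right fun hadj => ?_
        have hz := hlt z
        have hne := hprop hadj
        constructor
        · intro hcol
          rcases lt_trichotomy (c u) (c z) with h1 | h1 | h1
          · refine ⟨h1, ?_⟩
            rw [eCol_lt' G c n h1] at hcol
            by_cases hss : inS G c (c u) z u
            · rw [gE_S G c n hL hss] at hcol; omega
            · exact hss
          · omega
          · exfalso
            rw [eCol_gt' G c n h1] at hcol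
            rcases gE_or G c n u z with h2 | h2 <;> omega
        · rintro ⟨h1, hss⟩
          rw [eCol_lt' G c n h1, gE_T G c n hL hss, hTk]
      have hfv : (univ.filter fun z => G.Adj v z ∧ eCol G c n v z = T)
          = (univ.filter fun z => G.Adj v z ∧ c z = c u ∧ ¬ inS G c (c u) v z) := by
        apply filter_congr
        intro z _
        refine and_congr_right fun hadj => ?_
        have hz := hlt z
        have hne := hprop hadj
        constructor
        · intro hcol
          rcases lt_trichotomy (c v) (c z) with h1 | h1 | h1
          · exfalso
            rw [eCol_lt' G c n h1] at hcol
            rcases gE_or G c n z v with h2 | h2 <;> omega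
          · omega
          · rw [eCol_gt' G c n h1] at hcol
            by_cases hzL : c z = n - 2
            · rw [gE_L G c n hzL] at hcol; omega
            · by_cases hss : inS G c (c z) v z
              · rw [gE_S G c n hzL hss] at hcol; omega
              · rw [gE_T G c n hzL hss] at hcol
                have h3 : c z = c u := by omega
                rw [h3] at hss
                exact ⟨h3, hss⟩
        · rintro ⟨h1, hss⟩
          have h2 : c z < c v := by omega
          rw [eCol_gt' G c n h2, hTk]
          rw [← h1] at hss
          rw [gE_T G c n (by omega) hss, h1]
      rw [hfu, hfv]
      have hsplu : (univ.filter fun z => G.Adj u z ∧ c u < c z ∧ inS G c (c u) z u).card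
            + (univ.filter fun z => G.Adj u z ∧ c u < c z ∧ ¬ inS G c (c u) z u).card
          = Di G c (c u) u := split_low G c hprop u
      have hsplv : (univ.filter fun z => G.Adj v z ∧ c z = c u ∧ inS G c (c u) v z).card
            + (univ.filter fun z => G.Adj v z ∧ c z = c u ∧ ¬ inS G c (c u) v z).card
          = Di G c (c u) v := split_high G c hcuv
      have hDSu : (univ.filter fun z => G.Adj u z ∧ c u < c z ∧ inS G c (c u) z u).card
          = DSl G c u := rfl
      rw [hDSu] at hsplu
      have hvu : cVN G c n u
          = (if DSl G c u % 2 = 1 then c u else (n - 1) + c u) := by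
        unfold cVN
        rw [if_neg hL, if_neg (show ¬ n - 2 < c u by omega)]
      have hiu : (if cVN G c n u = T then 1 else 0)
          = (if DSl G c u % 2 = 1 then 0 else 1) := by
        rw [hvu, hTk]
        split_ifs <;> omega
      have hnv : ¬ cVN G c n v = T := by
        unfold cVN
        rw [hTk]
        split_ifs <;> omega
      rw [hiu, if_neg hnv]
      by_cases hnev : (mixedSet G c (c u) v).Nonempty
      · have hds : (univ.filter fun z => G.Adj v z ∧ c z = c u ∧ inS G c (c u) v z).card % 2 = 1 :=
          DS_odd G c hnev
        have hnsp : ¬ sP G c (c u) v u := fun hsp => hS ⟨hnev, Or.inl hsp⟩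
        unfold sP at hnsp
        split_ifs <;> omega
      · have hds : (univ.filter fun z => G.Adj v z ∧ c z = c u ∧ inS G c (c u) v z).card = 0 :=
          DS_pure G c hnev
        have hsp : sP G c (c u) v u := sP_of_pure G c huv.symm rfl hnev
        unfold sP at hsp
        split_ifs <;> omega

end TLIR

/-- For every finite simple graph `G` with chromatic number `n ≥ 2`,
`tlir(G) ≤ 2n − 2`. -/
theorem stmt7 {V : Type*} [Fintype V] (G : SimpleGraph V) (n : ℕ)
    (hchrom : G.chromaticNumber = n) (hn : 2 ≤ n) :
    HasTLIR G (2 * n - 2) := by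
  have hcolorable : G.Colorable n := by
    rw [← SimpleGraph.chromaticNumber_le_iff_colorable, hchrom]
  obtain ⟨C⟩ := hcolorable
  set c : V → ℕ := fun v => (C v : ℕ) with hcdef
  have hlt : ∀ w, c w < n := fun w => (C w).isLt
  have hprop : ∀ ⦃a b⦄, G.Adj a b → c a ≠ c b := by
    intro a b hab h
    exact C.valid hab (Fin.val_injective h)
  have hm : 0 < 2 * n - 2 := by omega
  let cVf : V → Fin (2 * n - 2) := fun w => ⟨TLIR.cVN G c n w % (2 * n - 2), Nat.mod_lt _ hm⟩
  have hsymm : ∀ a b : V,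
      (⟨TLIR.eCol G c n a b % (2 * n - 2), Nat.mod_lt _ hm⟩ : Fin (2 * n - 2))
        = ⟨TLIR.eCol G c n b a % (2 * n - 2), Nat.mod_lt _ hm⟩ := by
    intro a b
    simp only [Fin.mk.injEq]
    rw [TLIR.eCol_symm]
  let cEf : Sym2 V → Fin (2 * n - 2) :=
    Sym2.lift ⟨fun a b => ⟨TLIR.eCol G c n a b % (2 * n - 2), Nat.mod_lt _ hm⟩, hsymm⟩
  have hcE : ∀ a b : V, ((cEf s(a, b)) : ℕ) = TLIR.eCol G c n a b := by
    intro a b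
    have hx : cEf s(a, b)
        = ⟨TLIR.eCol G c n a b % (2 * n - 2), Nat.mod_lt _ hm⟩ :=
      Sym2.lift_mk _ a b
    rw [hx]
    exact Nat.mod_eq_of_lt (TLIR.eCol_lt G c n hn hlt a b)
  have hcV : ∀ w, ((cVf w) : ℕ) = TLIR.cVN G c n w := fun w =>
    Nat.mod_eq_of_lt (TLIR.cVN_lt G c n hn hlt w)
  refine ⟨cVf, cEf, ?_⟩
  intro u v huv
  rcases lt_trichotomy (c u) (c v) with h | h | h
  · exact TLIR.key G c n hn hlt hprop cVf cEf hcE hcV huv h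
  · exact absurd h (hprop huv)
  · have h2 := TLIR.key G c n hn hlt hprop cVf cEf hcE hcV huv.symm h
    rw [Sym2.eq_swap] at h2
    exact h2.symm
end

section
/- If a finite simple graph G admits an acyclic proper vertex coloring with k colors, then G admits a locally irregular total coloring with k colors, i.e., tlir(G) ≤ k. -/
open Finset
open scoped Classical

variable {V : Type*}

/-- `cV` is an acyclic proper vertex coloring of `G` with `k` colors: adjacent
vertices get distinct colors, and the subgraph induced by the union of any two
color classes contains no cycle. -/
def IsAcyclicProperColoring {V : Type*} (G : SimpleGraph V) {k : ℕ}
    (cV : V → Fin k) : Prop :=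
  (∀ u v, G.Adj u v → cV u ≠ cV v) ∧
  ∀ a b : Fin k,
    (SimpleGraph.fromRel fun u v =>
      G.Adj u v ∧ (cV u = a ∨ cV u = b) ∧ (cV v = a ∨ cV v = b)).IsAcyclic

open SimpleGraph

lemma walk_decomp {V : Type*} {F : SimpleGraph V} {u r v : V} (w : F.Walk u r)
    (h1 : w.getVert 1 = v) (hadj : F.Adj u v) :
    ∃ q : F.Walk v r, w = SimpleGraph.Walk.cons hadj q := by
  have hne : u ≠ v := hadj.ne
  have hnn : ¬ w.Nil := by
    rw [Walk.nil_iff_length_eq]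
    intro h0
    have ha : w.getVert 1 = r := w.getVert_of_length_le (by omega)
    have hb : w.getVert 0 = r := w.getVert_of_length_le (by omega)
    rw [Walk.getVert_zero] at hb
    exact hne (hb.trans (ha.symm.trans h1))
  obtain ⟨x, hx, q, hq⟩ := Walk.not_nil_iff.mp hnn
  have : x = v := by
    rw [hq, Walk.getVert_cons_succ, Walk.getVert_zero] at h1
    exact h1
  subst this
  exact ⟨q, hq⟩


lemma forest_orient {V : Type*} (F : SimpleGraph V) (hF : F.IsAcyclic) :
    ∃ P : V → V → Prop,
      (∀ u v, P u v → F.Adj u v) ∧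
      (∀ u v, F.Adj u v → (P u v ↔ ¬ P v u)) ∧
      (∀ u v w, P u v → P u w → v = w) := by
  classical
  let root : V → V := fun u => (F.connectedComponentMk u).out
  have hreach : ∀ u, F.Reachable u (root u) := by
    intro u
    have : F.connectedComponentMk (root u) = F.connectedComponentMk u :=
      (F.connectedComponentMk u).out_eq
    exact (ConnectedComponent.eq.mp this).symm
  let pth : ∀ u, F.Path u (root u) := fun u => (Classical.choice (hreach u)).toPath
  refine ⟨fun u v => F.Adj u v ∧ ((pth u : F.Walk u (root u)).getVert 1 = v),
    fun u v h => h.1, ?_, fun u v w h1 h2 => h1.2.symm.trans h2.2⟩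
  intro u v hadj
  have hne : u ≠ v := hadj.ne
  have hrooteq : root v = root u := by
    show ((F.connectedComponentMk v).out) = ((F.connectedComponentMk u).out)
    rw [ConnectedComponent.sound hadj.symm.reachable]
  set r := root u with hr
  let wu : F.Walk u r := (pth u : F.Walk u (root u))
  have hwu : wu.IsPath := (pth u).2
  let wv : F.Walk v r := ((pth v : F.Walk v (root v)).copy rfl hrooteq)
  have hwv : wv.IsPath := (Walk.isPath_copy _ _ _).mpr (pth v).2
  have hgv : wv.getVert 1 = (pth v : F.Walk v (root v)).getVert 1 := by
    simp [wv]
  constructor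
  · rintro ⟨-, hguv⟩ ⟨-, hgvu⟩
    rw [← hgv] at hgvu
    obtain ⟨qu, hqu⟩ := walk_decomp wu hguv hadj
    obtain ⟨qv, hqv⟩ := walk_decomp wv hgvu hadj.symm
    have hqup : qu.IsPath := by rw [hqu, Walk.cons_isPath_iff] at hwu; exact hwu.1
    have hqvp : qv.IsPath := by rw [hqv, Walk.cons_isPath_iff] at hwv; exact hwv.1
    have e1 : qu = wv := by
      have := hF.path_unique ⟨qu, hqup⟩ ⟨wv, hwv⟩
      exact congrArg Subtype.val this
    have e2 : qv = wu := by
      have := hF.path_unique ⟨qv, hqvp⟩ ⟨wu, hwu⟩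
      exact congrArg Subtype.val this
    have : wu.length = wu.length + 2 := by
      calc wu.length = qu.length + 1 := by rw [hqu]; simp
        _ = wv.length + 1 := by rw [e1]
        _ = qv.length + 1 + 1 := by rw [hqv]; simp
        _ = wu.length + 2 := by rw [e2]
    omega
  · intro hnot
    have hgvu : wv.getVert 1 ≠ u := by
      intro h
      exact hnot ⟨hadj.symm, by rw [← hgv]; exact h⟩
    refine ⟨hadj, ?_⟩
    rw [show (pth u : F.Walk u (root u)).getVert 1 = wu.getVert 1 from rfl]
    by_cases hu : u ∈ wv.support
    · exfalso
      have hts := wv.take_spec hu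
      have ht : (wv.takeUntil u hu).IsPath := hwv.takeUntil hu
      have hone : (Walk.cons hadj.symm Walk.nil : F.Walk v u).IsPath := by
        simp [Walk.cons_isPath_iff, hne.symm]
      have e : wv.takeUntil u hu = Walk.cons hadj.symm Walk.nil := by
        have := hF.path_unique ⟨wv.takeUntil u hu, ht⟩ ⟨_, hone⟩
        exact congrArg Subtype.val this
      apply hgvu
      rw [← hts, e]
      simp
    · have hc : (Walk.cons hadj wv).IsPath := (Walk.cons_isPath_iff _ _).mpr ⟨hwv, hu⟩
      have e : wu = Walk.cons hadj wv := by
        have := hF.path_unique ⟨wu, hwu⟩ ⟨_, hc⟩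
        exact congrArg Subtype.val this
      rw [e, Walk.getVert_cons_succ, Walk.getVert_zero]

/-- If a finite simple graph `G` admits an acyclic proper vertex
coloring with `k` colors, then `tlir(G) ≤ k`. -/
theorem stmt8 {V : Type*} [Fintype V] (G : SimpleGraph V) (k : ℕ)
    (cV : V → Fin k) (hcV : IsAcyclicProperColoring G cV) :
    HasTLIR G k := by
  classical
  obtain ⟨hproper, hacyc⟩ := hcV
  choose P hP1 hP2 hP3 using fun a b : Fin k =>
    forest_orient _ (hacyc a b)
  set par : V → V → Prop :=
    fun u v => P (min (cV u) (cV v)) (max (cV u) (cV v)) u v with hpar_def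
  have hpar_symm_idx : ∀ u v, par v u =
      P (min (cV u) (cV v)) (max (cV u) (cV v)) v u := by
    intro u v
    show P (min (cV v) (cV u)) (max (cV v) (cV u)) v u = _
    rw [min_comm (cV v) (cV u), max_comm (cV v) (cV u)]
  have hparAdj : ∀ u v, par u v → G.Adj u v := by
    intro u v h
    have := hP1 _ _ _ _ h
    rw [SimpleGraph.fromRel_adj] at this
    rcases this.2 with h' | h'
    · exact h'.1
    · exact h'.1.symm
  have hFadj : ∀ u v, G.Adj u v →
      (SimpleGraph.fromRel fun x y =>
        G.Adj x y ∧ (cV x = min (cV u) (cV v) ∨ cV x = max (cV u) (cV v)) ∧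
          (cV y = min (cV u) (cV v) ∨ cV y = max (cV u) (cV v))).Adj u v := by
    intro u v h
    rw [SimpleGraph.fromRel_adj]
    refine ⟨h.ne, Or.inl ⟨h, ?_, ?_⟩⟩
    · rcases le_total (cV u) (cV v) with hle | hle
      · exact Or.inl (min_eq_left hle).symm
      · exact Or.inr (max_eq_left hle).symm
    · rcases le_total (cV u) (cV v) with hle | hle
      · exact Or.inr (max_eq_right hle).symm
      · exact Or.inl (min_eq_right hle).symm
  have hone : ∀ u v, G.Adj u v → (par u v ↔ ¬ par v u) := by
    intro u v h
    rw [hpar_symm_idx u v, hpar_def]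
    exact hP2 _ _ _ _ (hFadj u v h)
  have huniq : ∀ u v w, par u v → par u w → cV v = cV w → v = w := by
    intro u v w h1 h2 hvw
    rw [hpar_def] at h1 h2
    rw [hvw] at h1
    exact hP3 _ _ _ _ _ h1 h2
  -- edge coloring
  let f : V → V → Fin k := fun u v =>
    if par u v then cV v else if par v u then cV u else min (cV u) (cV v)
  have hfsymm : ∀ u v, f u v = f v u := by
    intro u v
    by_cases h1 : par u v
    · have h2 : ¬ par v u := (hone u v (hparAdj u v h1)).mp h1
      simp [f, h1, h2]
    · by_cases h2 : par v u
      · simp [f, h1, h2]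
      · simp [f, h1, h2, min_comm]
  let cE : Sym2 V → Fin k := Sym2.lift ⟨f, hfsymm⟩
  have hcE : ∀ u v, par u v → cE s(u, v) = cV v := by
    intro u v h
    show f u v = cV v
    simp [f, h]
  -- key degree computations
  have key : ∀ u v, G.Adj u v → par u v →
      totalDeg G cV cE (cV v) u ≠ totalDeg G cV cE (cV v) v := by
    intro u v hadj hpar
    have hne : cV u ≠ cV v := hproper u v hadj
    have h1 : totalDeg G cV cE (cV v) u = 1 := by
      unfold totalDeg
      have hfilter : (univ.filter fun w => G.Adj u w ∧ cE s(u, w) = cV v) = {v} := by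
        ext w
        simp only [mem_filter, mem_univ, true_and, mem_singleton]
        constructor
        · rintro ⟨haw, hcw⟩
          rcases (em (par u w)) with hp | hp
          · have : cE s(u, w) = cV w := hcE u w hp
            rw [this] at hcw
            exact (huniq u v w hpar hp hcw.symm).symm
          · have hp' : par w u := (hone w u haw.symm).mpr hp
            have : cE s(u, w) = cV u := by
              show f u w = cV u
              simp [f, hp, hp']
            rw [this] at hcw
            exact absurd hcw hne
        · intro h
          rw [h]
          exact ⟨hadj, hcE u v hpar⟩
      rw [hfilter, if_neg hne]
      simp
    have h2 : 2 ≤ totalDeg G cV cE (cV v) v := by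
      unfold totalDeg
      have hmem : u ∈ univ.filter fun w => G.Adj v w ∧ cE s(v, w) = cV v := by
        simp only [mem_filter, mem_univ, true_and]
        refine ⟨hadj.symm, ?_⟩
        have : s(v, u) = s(u, v) := Sym2.eq_swap
        rw [this]
        exact hcE u v hpar
      have hcard : 1 ≤ (univ.filter fun w => G.Adj v w ∧ cE s(v, w) = cV v).card :=
        card_pos.mpr ⟨u, hmem⟩
      rw [if_pos rfl]
      omega
    omega
  refine ⟨cV, cE, ?_⟩
  intro u v hadj
  rcases em (par u v) with hp | hp
  · have : cE s(u, v) = cV v := hcE u v hp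
    rw [this]
    exact key u v hadj hp
  · have hp' : par v u := (hone v u hadj.symm).mpr hp
    have : cE s(u, v) = cV u := by
      rw [show s(u, v) = s(v, u) from Sym2.eq_swap]
      exact hcE v u hp'
    rw [this]
    exact (key v u hadj.symm hp').symm
end

section
/- If G is a finite simple graph with maximum degree exactly 4, then G admits a locally irregular total coloring with 5 colors, i.e., tlir(G) ≤ 5. -/
open Finset
open scoped Classical

variable {V : Type*}

/-!
Orient `G` so that every vertex is the head of at most two edges (Hall's theorem: every degree is
at most `4`), take a proper `5`-colouring `σ` of the vertices and colour each edge with the colour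
of its tail. In the colour `σ u` of an edge `u → v`, the tail `u` sees all its out-edges and
itself, while the head `v` sees only its in-edges coming from vertices of colour `σ u`; so `u` has
total degree at least `2` and `v` at most `2`. If both are `2`, the vertex `u` is recoloured with a
colour avoiding `σ u` and the colours of its in-neighbours. No edge at `u` carries the new colour,
so this lowers the total degree of `u` in colour `σ u` to `1` and disturbs no other edge.
-/

theorem Fin.exists_notMem_image {α : Type*} {k : ℕ} (s : Finset α) (f : α → Fin k)
    (h : #s < k) : ∃ c, c ∉ s.image f := by
  obtain ⟨c, -, hc⟩ := exists_mem_notMem_of_card_lt_card (s := s.image f) (t := univ)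
    (by simpa using card_image_le.trans_lt h)
  exact ⟨c, hc⟩

namespace Sym2

variable {α : Type*} (head : Sym2 V → V) (head_mem : ∀ e, head e ∈ e)

noncomputable def tailColoring (σ : V → α) (e : Sym2 V) : α := σ (Mem.other (head_mem e))

variable {head head_mem} {σ : V → α} {u v : V}

theorem tailColoring_of_head_eq_right (h : head s(u, v) = v) :
    tailColoring head head_mem σ s(u, v) = σ u := by
  have hspec := other_spec (head_mem s(u, v))
  unfold tailColoring
  generalize Mem.other (head_mem s(u, v)) = t at hspec ⊢
  rw [h] at hspec
  rw [Sym2.congr_right.1 (hspec.trans Sym2.eq_swap)]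

theorem tailColoring_of_head_eq_left (h : head s(u, v) = u) :
    tailColoring head head_mem σ s(u, v) = σ v := by
  rw [Sym2.eq_swap] at h ⊢
  exact tailColoring_of_head_eq_right h

end Sym2

namespace SimpleGraph

variable [Fintype V] (G : SimpleGraph V) {k : ℕ}

theorem colorable_of_forall_degree_lt [DecidableRel G.Adj] (h : ∀ v, G.degree v < k) :
    G.Colorable k := by
  suffices ∀ s : Finset V, ∃ σ : V → Fin k, ∀ u ∈ s, ∀ v ∈ s, G.Adj u v → σ u ≠ σ v by
    obtain ⟨σ, hσ⟩ := this univ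
    exact ⟨Coloring.mk σ fun huv => hσ _ (mem_univ _) _ (mem_univ _) huv⟩
  intro s
  induction s using Finset.induction_on with
  | empty => exact ⟨fun v => ⟨0, Nat.zero_lt_of_lt (h v)⟩, by simp⟩
  | insert a s ha ih =>
    obtain ⟨σ, hσ⟩ := ih
    obtain ⟨c, hc⟩ := Fin.exists_notMem_image (G.neighborFinset a) σ (by simpa using h a)
    set σ' := Function.update σ a c
    have hσ'_self : σ' a = c := Function.update_self _ _ _
    have hσ'_of_ne : ∀ w ≠ a, σ' w = σ w := fun w hw => Function.update_of_ne hw _ _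
    have hσ'_adj : ∀ w, G.Adj a w → σ' a ≠ σ' w := by
      intro w haw hcw
      rw [hσ'_self, hσ'_of_ne w haw.ne.symm] at hcw
      exact hc (hcw ▸ mem_image_of_mem σ ((mem_neighborFinset _ _ _).2 haw))
    refine ⟨σ', ?_⟩
    simp only [mem_insert]
    rintro u (rfl | hu) v (rfl | hv) huv
    · exact absurd huv G.irrefl
    · exact hσ'_adj v huv
    · exact (hσ'_adj u huv.symm).symm
    · rw [hσ'_of_ne u (ne_of_mem_of_not_mem hu ha), hσ'_of_ne v (ne_of_mem_of_not_mem hv ha)]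
      exact hσ u hu v hv huv

/-- An orientation of `G` is encoded by `head : Sym2 V → V`, the endpoint each edge points to. -/
noncomputable def outNeighborFinset (head : Sym2 V → V) (v : V) : Finset V :=
  {w | G.Adj v w ∧ head s(v, w) = w}

noncomputable def inNeighborFinset (head : Sym2 V → V) (v : V) : Finset V :=
  {w | G.Adj v w ∧ head s(v, w) = v}

/-- Hall's condition for assigning to each edge one of `k` slots at one of its endpoints. -/
theorem card_le_card_endpoint_slots [DecidableRel G.Adj] (h : ∀ v, G.degree v ≤ 2 * k)
    (s : Finset G.edgeSet) : #s ≤ #{p : V × Fin k | ∃ e ∈ s, p.1 ∈ (e : Sym2 V)} := by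
  set S : Finset V := {v | ∃ e ∈ s, v ∈ (e : Sym2 V)}
  have hS : ({p : V × Fin k | ∃ e ∈ s, p.1 ∈ (e : Sym2 V)} : Finset _) = S ×ˢ univ := by
    ext p; simp [S]
  have hcount : #s * 2 ≤ #S * (2 * k) := by
    refine card_mul_le_card_mul (fun (e : G.edgeSet) (v : V) => v ∈ (e : Sym2 V)) ?_ ?_
    · rintro ⟨e, he⟩ hes
      induction e using Sym2.ind with
      | _ a b =>
        refine (card_pair (G.ne_of_adj he)).symm.le.trans (card_le_card fun v hv => ?_)
        have hv' : v ∈ s(a, b) := Sym2.mem_iff.2 (by simpa using hv)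
        simp only [bipartiteAbove, mem_filter, S, mem_univ, true_and]
        exact ⟨⟨_, hes, hv'⟩, hv'⟩
    · intro v _
      calc #(s.bipartiteBelow _ v) ≤ #(G.incidenceFinset v) := by
            refine card_le_card_of_injOn Subtype.val ?_ Subtype.val_injective.injOn
            intro e he
            simp only [bipartiteBelow, coe_filter, Set.mem_ofPred_eq] at he
            simpa [mem_incidenceFinset, incidenceSet] using he.2
        _ = G.degree v := card_incidenceFinset_eq_degree G v
        _ ≤ 2 * k := h v
  rw [hS, card_product, card_univ, Fintype.card_fin]
  linarith

theorem exists_head_card_inNeighborFinset_le [DecidableRel G.Adj]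
    (h : ∀ v, G.degree v ≤ 2 * k) :
    ∃ head : Sym2 V → V, (∀ e, head e ∈ e) ∧ ∀ v, #(G.inNeighborFinset head v) ≤ k := by
  obtain ⟨f, hf_inj, hf_mem⟩ := (Fintype.all_card_le_filter_rel_iff_exists_injective
    (fun (e : G.edgeSet) (p : V × Fin k) => p.1 ∈ (e : Sym2 V))).1
    (G.card_le_card_endpoint_slots h)
  let head (e : Sym2 V) : V := if he : e ∈ G.edgeSet then (f ⟨e, he⟩).1 else e.out.1
  have head_of_adj {v w : V} (hvw : G.Adj v w) : head s(v, w) = (f ⟨s(v, w), hvw⟩).1 :=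
    dif_pos hvw
  refine ⟨head, fun e => ?_, fun v => ?_⟩
  · unfold head
    split_ifs with he
    exacts [hf_mem ⟨e, he⟩, e.out_fst_mem]
  · -- each in-edge `vw` of `v` is matched to its own slot `(v, i)`
    calc #(G.inNeighborFinset head v) ≤ #(univ : Finset (Fin k)) := by
          refine card_le_card_of_forall_subsingleton
            (fun w i => ∃ hvw : G.Adj v w, f ⟨s(v, w), hvw⟩ = (v, i)) ?_ ?_
          · intro w hw
            simp only [inNeighborFinset, mem_filter, mem_univ, true_and] at hw
            obtain ⟨hvw, hhead⟩ := hw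
            refine ⟨(f ⟨s(v, w), hvw⟩).2, mem_univ _, hvw, Prod.ext ?_ rfl⟩
            rw [← head_of_adj hvw, hhead]
          · rintro i - w₁ ⟨-, _, hf₁⟩ w₂ ⟨-, _, hf₂⟩
            exact Sym2.congr_right.1 (congrArg Subtype.val (hf_inj (hf₁.trans hf₂.symm)))
      _ = k := by simp

theorem totalDeg_tailColoring {head : Sym2 V → V} (head_mem : ∀ e, head e ∈ e)
    (τ σ : V → Fin k) (c : Fin k) (x : V) :
    totalDeg G τ (Sym2.tailColoring head head_mem σ) c x =
      (if σ x = c then #(G.outNeighborFinset head x) else 0) +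
        #{w ∈ G.inNeighborFinset head x | σ w = c} + if τ x = c then 1 else 0 := by
  have hsplit : ({w | G.Adj x w ∧ Sym2.tailColoring head head_mem σ s(x, w) = c} : Finset V) =
      {w ∈ G.outNeighborFinset head x | σ x = c} ∪ {w ∈ G.inNeighborFinset head x | σ w = c} := by
    ext w
    simp only [outNeighborFinset, inNeighborFinset, mem_filter, mem_univ, true_and, mem_union]
    constructor
    · rintro ⟨hxw, hc⟩
      rcases Sym2.mem_iff.1 (head_mem s(x, w)) with hx | hw
      · rw [Sym2.tailColoring_of_head_eq_left hx] at hc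
        exact Or.inr ⟨⟨hxw, hx⟩, hc⟩
      · rw [Sym2.tailColoring_of_head_eq_right hw] at hc
        exact Or.inl ⟨⟨hxw, hw⟩, hc⟩
    · rintro (⟨⟨hxw, hw⟩, hc⟩ | ⟨⟨hxw, hx⟩, hc⟩)
      · exact ⟨hxw, (Sym2.tailColoring_of_head_eq_right hw).trans hc⟩
      · exact ⟨hxw, (Sym2.tailColoring_of_head_eq_left hx).trans hc⟩
  have hdisj : Disjoint (G.outNeighborFinset head x) (G.inNeighborFinset head x) := by
    simp only [Finset.disjoint_left, outNeighborFinset, inNeighborFinset, mem_filter, mem_univ,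
      true_and]
    rintro w ⟨hxw, hw⟩ ⟨-, hx⟩
    exact hxw.ne (hx.symm.trans hw)
  rw [totalDeg, hsplit, card_union_of_disjoint (disjoint_filter_filter hdisj), filter_const,
    apply_ite card, card_empty]

/-- Tail colouring alone fails on an edge `xw` exactly when `x` is the tail of no other edge and
`w` has two in-neighbours of `x`'s colour: both ends then have total degree `2`. -/
def NeedsRecolor (head : Sym2 V → V) (σ : V → Fin k) (x : V) : Prop :=
  ∃ w, G.outNeighborFinset head x = {w} ∧ #{z ∈ G.inNeighborFinset head w | σ z = σ x} = 2

variable {G}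

theorem totalDeg_tail_ne_totalDeg_head {head : Sym2 V → V} (head_mem : ∀ e, head e ∈ e)
    (σ : G.Coloring (Fin k)) (τ : V → Fin k) (hin : ∀ v, #(G.inNeighborFinset head v) ≤ 2)
    (hτ_in : ∀ v, ∀ w ∈ G.inNeighborFinset head v, τ v ≠ σ w)
    (hτ_self : ∀ x, τ x = σ x ↔ ¬ G.NeedsRecolor head σ x)
    {u v : V} (huv : G.Adj u v) (hv : head s(u, v) = v) :
    totalDeg G τ (Sym2.tailColoring head head_mem σ) (σ u) u ≠
      totalDeg G τ (Sym2.tailColoring head head_mem σ) (σ u) v := by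
  have hv_out : v ∈ G.outNeighborFinset head u := by simp [outNeighborFinset, huv, hv]
  have hu_in : u ∈ G.inNeighborFinset head v := by
    simpa [inNeighborFinset, huv.symm, Sym2.eq_swap] using hv
  have hno_loop : #{w ∈ G.inNeighborFinset head u | σ w = σ u} = 0 := by
    refine card_eq_zero.2 (filter_eq_empty_iff.2 fun w hw => ?_)
    simp only [inNeighborFinset, mem_filter, mem_univ, true_and] at hw
    exact (σ.valid hw.1).symm
  rw [totalDeg_tailColoring, totalDeg_tailColoring, if_pos rfl, if_neg (σ.valid huv).symm,
    if_neg (hτ_in v u hu_in), hno_loop]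
  set A := #(G.outNeighborFinset head u)
  set q := #{z ∈ G.inNeighborFinset head v | σ z = σ u}
  have hA : 1 ≤ A := card_pos.2 ⟨v, hv_out⟩
  have hq : 1 ≤ q := card_pos.2 ⟨u, mem_filter.2 ⟨hu_in, rfl⟩⟩
  have hq' : q ≤ 2 := (card_le_card (filter_subset _ _)).trans (hin v)
  by_cases hrec : G.NeedsRecolor head σ u
  · obtain ⟨w, hw, hq2⟩ := hrec
    obtain rfl : v = w := mem_singleton.1 (hw ▸ hv_out)
    have hA1 : A = 1 := by simp [A, hw]
    rw [if_neg (mt (hτ_self u).1 (not_not.2 ⟨v, hw, hq2⟩))]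
    omega
  · have hq_of_A : A = 1 → q ≠ 2 := fun hA1 hq2 => hrec
      ⟨v, eq_singleton_iff_unique_mem.2 ⟨hv_out, fun x hx => card_le_one_iff.1 hA1.le hx hv_out⟩,
        hq2⟩
    rw [if_pos ((hτ_self u).2 hrec)]
    omega

theorem hasTLIR_of_coloring_of_card_inNeighborFinset_le (hk : 3 < k) (σ : G.Coloring (Fin k))
    {head : Sym2 V → V} (head_mem : ∀ e, head e ∈ e)
    (hin : ∀ v, #(G.inNeighborFinset head v) ≤ 2) : HasTLIR G k := by
  have hfresh (x : V) : ∃ c, c ∉ (insert x (G.inNeighborFinset head x)).image σ :=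
    Fin.exists_notMem_image _ _ ((card_insert_le _ _).trans_lt (by linarith [hin x]))
  choose fresh hfresh using hfresh
  have hfresh_in (x : V) : ∀ w ∈ G.inNeighborFinset head x, fresh x ≠ σ w :=
    fun w hw h => hfresh x (mem_image.2 ⟨w, mem_insert_of_mem hw, h.symm⟩)
  have hfresh_self (x : V) : fresh x ≠ σ x :=
    fun h => hfresh x (mem_image.2 ⟨x, mem_insert_self _ _, h.symm⟩)
  let τ x := if G.NeedsRecolor head σ x then fresh x else σ x
  have hτ_in : ∀ v, ∀ w ∈ G.inNeighborFinset head v, τ v ≠ σ w := by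
    intro v w hw
    by_cases hrec : G.NeedsRecolor head σ v
    · simpa only [τ, if_pos hrec] using hfresh_in v w hw
    · simp only [inNeighborFinset, mem_filter, mem_univ, true_and] at hw
      simpa only [τ, if_neg hrec] using σ.valid hw.1
  have hτ_self : ∀ x, τ x = σ x ↔ ¬ G.NeedsRecolor head σ x := by
    intro x
    by_cases hrec : G.NeedsRecolor head σ x <;> simp [τ, hrec, hfresh_self]
  refine ⟨τ, Sym2.tailColoring head head_mem σ, fun u v huv => ?_⟩
  rcases Sym2.mem_iff.1 (head_mem s(u, v)) with hu | hv
  · rw [Sym2.eq_swap] at hu ⊢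
    rw [Sym2.tailColoring_of_head_eq_right hu]
    exact (totalDeg_tail_ne_totalDeg_head head_mem σ τ hin hτ_in hτ_self huv.symm hu).symm
  · rw [Sym2.tailColoring_of_head_eq_right hv]
    exact totalDeg_tail_ne_totalDeg_head head_mem σ τ hin hτ_in hτ_self huv hv

end SimpleGraph

/-- Every finite simple graph with maximum degree exactly 4 admits a
locally irregular total coloring with 5 colors, i.e. `tlir(G) ≤ 5`. -/
theorem stmt10 {V : Type*} [Fintype V] (G : SimpleGraph V) [DecidableRel G.Adj]
    (hmax : G.maxDegree = 4) : HasTLIR G 5 := by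
  have hdeg (v : V) : G.degree v ≤ 4 := hmax ▸ G.degree_le_maxDegree v
  obtain ⟨σ⟩ := G.colorable_of_forall_degree_lt fun v => Nat.lt_succ_of_le (hdeg v)
  obtain ⟨head, head_mem, hin⟩ := G.exists_head_card_inNeighborFinset_le (k := 2) hdeg
  exact G.hasTLIR_of_coloring_of_card_inNeighborFinset_le (by norm_num) σ head_mem hin
end
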